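/- arXiv:2101.02378 — 8 statements merged into one kernel-verified Lean document; each statement's English description precedes it below -/
import Mathlib

section
/- Let γ ∈ [0,1) and α ∈ (−1/2 + γ/2, 1/2 + γ/2), and set H = α − γ/2 + 1/2. Then the constant c(α,γ) := B(2α+1, 1−γ) + ∫₀^∞ ((1+u)^α − u^α)² u^{−γ} du is finite, and for every t ≥ 0 one has ∫_ℝ ((t−u)₊^α − (−u)₊^α)² |u|^{−γ} du = c(α,γ) · t^{2H} (in particular the left-hand integral is finite). Here x₊ = max(x,0) and x₊^α is interpreted as 0 when x₊ = 0. -/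
/-! The substitution `u = t v` shows that the integrand at time `t` is `t^(2α-γ)` times the
integrand at time `1`, evaluated at `u / t`, so the integral scales like `t^(2α-γ+1) = t^(2H)`.
At time `1` the part `u > 0` of the integrand is `(1-u)₊^(2α) u^(-γ)`, a Beta integrand after
`u ↦ 1 - u`, and the part `u < 0` becomes the second summand of `c(α,γ)` after `u ↦ -u`. That
summand is finite because its integrand is `O(u^(-γ) + u^(2α-γ))` near `0` and, by the mean value
theorem, `O(u^(2α-2-γ))` at infinity. -/

open MeasureTheory

/-- `plusPow x a = x₊^a`, interpreted as `0` when `x₊ = 0`. -/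
noncomputable def plusPow (x a : ℝ) : ℝ := if 0 < x then x ^ a else 0

/-- The Beta function `B(x,y) = ∫₀¹ u^(x-1) (1-u)^(y-1) du`. -/
noncomputable def betaFn (x y : ℝ) : ℝ :=
  ∫ u in Set.Ioo (0:ℝ) 1, u ^ (x - 1) * (1 - u) ^ (y - 1)

open Set Real

lemma plusPow_of_pos {x : ℝ} (hx : 0 < x) (a : ℝ) : plusPow x a = x ^ a := if_pos hx

lemma plusPow_of_nonpos {x : ℝ} (hx : x ≤ 0) (a : ℝ) : plusPow x a = 0 := if_neg hx.not_gt

lemma plusPow_mul {c : ℝ} (hc : 0 < c) (x a : ℝ) : plusPow (c * x) a = c ^ a * plusPow x a := by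
  rcases lt_or_ge 0 x with hx | hx
  · rw [plusPow_of_pos (mul_pos hc hx), plusPow_of_pos hx, mul_rpow hc.le hx.le]
  · rw [plusPow_of_nonpos (mul_nonpos_of_nonneg_of_nonpos hc.le hx), plusPow_of_nonpos hx,
      mul_zero]

lemma rpow_sq {x : ℝ} (hx : 0 ≤ x) (a : ℝ) : (x ^ a) ^ 2 = x ^ (2 * a) := by
  rw [← rpow_mul_natCast hx, mul_comm]; norm_num

lemma betaFn_comm (x y : ℝ) : betaFn x y = betaFn y x := by
  simp only [betaFn, ← integral_Ioc_eq_integral_Ioo,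
    ← intervalIntegral.integral_of_le zero_le_one]
  simpa [mul_comm] using
    (intervalIntegral.integral_comp_sub_left (fun u : ℝ => u ^ (x - 1) * (1 - u) ^ (y - 1)) 1
      (a := 0) (b := 1)).symm

lemma integrableOn_rpow_mul_one_sub_rpow {p q : ℝ} (hp : -1 < p) (hq : -1 < q) :
    IntegrableOn (fun u : ℝ => u ^ p * (1 - u) ^ q) (Ioo 0 1) := by
  have hβ := (Complex.betaIntegral_convergent (u := p + 1) (v := q + 1)
    (by simpa using neg_lt_iff_pos_add.mp hp) (by simpa using neg_lt_iff_pos_add.mp hq)).norm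
  refine ((intervalIntegrable_iff_integrableOn_Ioo_of_le zero_le_one).1 hβ).congr_fun
    (fun u hu => ?_) measurableSet_Ioo
  have h1u : (1 : ℂ) - u = ((1 - u : ℝ) : ℂ) := by push_cast; ring
  simp only [norm_mul, h1u, Complex.norm_cpow_eq_rpow_re_of_pos hu.1,
    Complex.norm_cpow_eq_rpow_re_of_pos (sub_pos.2 hu.2)]
  simp

/-- The integrand of `E[X(t)²]` given by the Itô isometry. -/
noncomputable def gfbmIntegrand (α γ t u : ℝ) : ℝ :=
  (plusPow (t - u) α - plusPow (-u) α) ^ 2 * |u| ^ (-γ)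

lemma gfbmIntegrand_mul {t : ℝ} (ht : 0 < t) (α γ u : ℝ) :
    gfbmIntegrand α γ t (t * u) = t ^ (2 * α - γ) * gfbmIntegrand α γ 1 u := by
  have hsub : t - t * u = t * (1 - u) := by ring
  have hneg : -(t * u) = t * -u := by ring
  simp only [gfbmIntegrand, hsub, hneg, plusPow_mul ht, abs_mul, abs_of_pos ht,
    mul_rpow ht.le (abs_nonneg u), ← mul_sub, mul_pow, rpow_sq ht.le, sub_eq_add_neg (2 * α),
    rpow_add ht]
  ring

lemma gfbmIntegrand_one_of_mem_Ioo (α γ : ℝ) {u : ℝ} (hu : u ∈ Ioo 0 1) :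
    gfbmIntegrand α γ 1 u = u ^ (-γ) * (1 - u) ^ (2 * α) := by
  rw [gfbmIntegrand, plusPow_of_pos (sub_pos.2 hu.2), plusPow_of_nonpos (neg_nonpos.2 hu.1.le),
    sub_zero, rpow_sq (sub_pos.2 hu.2).le, abs_of_pos hu.1, mul_comm]

lemma gfbmIntegrand_one_of_one_le (α γ : ℝ) {u : ℝ} (hu : 1 ≤ u) :
    gfbmIntegrand α γ 1 u = 0 := by
  rw [gfbmIntegrand, plusPow_of_nonpos (sub_nonpos.2 hu), plusPow_of_nonpos (by linarith)]
  simp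

lemma gfbmIntegrand_one_neg (α γ : ℝ) {v : ℝ} (hv : 0 < v) :
    gfbmIntegrand α γ 1 (-v) = (plusPow (1 + v) α - plusPow v α) ^ 2 * v ^ (-γ) := by
  rw [gfbmIntegrand, sub_neg_eq_add, neg_neg, abs_neg, abs_of_pos hv]

lemma gfbmIntegrand_zero_left (α γ : ℝ) : gfbmIntegrand α γ 0 = 0 := by
  ext u; simp [gfbmIntegrand]

lemma abs_one_add_rpow_sub_rpow_le {α x : ℝ} (hα : α ≤ 1) (hx : 0 < x) :
    |(1 + x) ^ α - x ^ α| ≤ |α| * x ^ (α - 1) := by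
  have hderiv : ∀ y ∈ Icc x (x + 1),
      HasDerivWithinAt (fun y : ℝ => y ^ α) (α * y ^ (α - 1)) (Icc x (x + 1)) y := fun y hy =>
    (hasDerivAt_rpow_const (Or.inl (hx.trans_le hy.1).ne')).hasDerivWithinAt
  have hbound : ∀ y ∈ Icc x (x + 1), ‖α * y ^ (α - 1)‖ ≤ |α| * x ^ (α - 1) := fun y hy => by
    rw [norm_mul, norm_of_nonneg (rpow_nonneg (hx.le.trans hy.1) _)]
    exact mul_le_mul_of_nonneg_left (rpow_le_rpow_of_nonpos hx hy.1 (by linarith))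
      (abs_nonneg _)
  simpa [add_comm] using (convex_Icc x (x + 1)).norm_image_sub_le_of_norm_hasDerivWithin_le
    hderiv hbound (left_mem_Icc.2 (by linarith)) (right_mem_Icc.2 (by linarith))

lemma integrableOn_Ioc_sq_one_add_rpow_sub_rpow_mul_rpow {α γ : ℝ} (hγ : γ < 1)
    (hαγ : -1 < 2 * α - γ) :
    IntegrableOn (fun u : ℝ => ((1 + u) ^ α - u ^ α) ^ 2 * u ^ (-γ)) (Ioc 0 1) := by
  have hγ' : IntegrableOn (fun u : ℝ => u ^ (-γ)) (Icc 0 1) :=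
    (intervalIntegrable_iff_integrableOn_Icc_of_le zero_le_one).1
      (intervalIntegral.intervalIntegrable_rpow' (by linarith))
  have hαγ' : IntegrableOn (fun u : ℝ => u ^ (2 * α - γ)) (Ioc 0 1) :=
    (intervalIntegrable_iff_integrableOn_Ioc_of_le zero_le_one).1
      (intervalIntegral.intervalIntegrable_rpow' hαγ)
  have hcont : ContinuousOn (fun u : ℝ => 2 * (1 + u) ^ (2 * α)) (Icc 0 1) :=
    continuousOn_const.mul <| ContinuousOn.rpow_const (by fun_prop) fun u hu =>
      Or.inl (by linarith [hu.1] : (0 : ℝ) < 1 + u).ne'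
  have hmajorant := ((hγ'.continuousOn_mul hcont isCompact_Icc).mono_set Ioc_subset_Icc_self).add
    (hαγ'.const_mul 2)
  refine hmajorant.mono' (by fun_prop) ((ae_restrict_iff' measurableSet_Ioc).2
    (.of_forall fun u hu => ?_))
  have hu := hu.1
  rw [Pi.add_apply, norm_of_nonneg (by positivity), sub_eq_add_neg (2 * α), rpow_add hu,
    ← rpow_sq (by linarith : (0 : ℝ) ≤ 1 + u), ← rpow_sq hu.le]
  nlinarith [sq_nonneg ((1 + u) ^ α + u ^ α), rpow_nonneg hu.le (-γ)]

lemma integrableOn_Ioi_sq_one_add_rpow_sub_rpow_mul_rpow {α γ : ℝ} (hα : α ≤ 1)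
    (hαγ : 2 * α - γ < 1) :
    IntegrableOn (fun u : ℝ => ((1 + u) ^ α - u ^ α) ^ 2 * u ^ (-γ)) (Ioi 1) := by
  have hmajorant : IntegrableOn (fun u : ℝ => α ^ 2 * u ^ (2 * (α - 1) - γ)) (Ioi 1) :=
    ((integrableOn_Ioi_rpow_iff one_pos).2 (by linarith)).const_mul _
  refine hmajorant.mono' (by fun_prop) ((ae_restrict_iff' measurableSet_Ioi).2
    (.of_forall fun u hu => ?_))
  have hu : (0 : ℝ) < u := zero_lt_one.trans hu
  have hsq : ((1 + u) ^ α - u ^ α) ^ 2 ≤ α ^ 2 * u ^ (2 * (α - 1)) := by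
    rw [← sq_abs, ← sq_abs α, ← rpow_sq hu.le, ← mul_pow]
    exact pow_le_pow_left₀ (abs_nonneg _) (abs_one_add_rpow_sub_rpow_le hα hu) 2
  rw [norm_of_nonneg (by positivity), sub_eq_add_neg _ γ, rpow_add hu, ← mul_assoc]
  exact mul_le_mul_of_nonneg_right hsq (rpow_nonneg hu.le _)

lemma integrableOn_Ioi_sq_plusPow_one_add_sub_mul_rpow {α γ : ℝ} (hγ : γ < 1)
    (hαγ₁ : -1 < 2 * α - γ) (hαγ₂ : 2 * α - γ < 1) :
    IntegrableOn (fun u : ℝ => (plusPow (1 + u) α - plusPow u α) ^ 2 * u ^ (-γ)) (Ioi 0) := by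
  have hrpow := (integrableOn_Ioc_sq_one_add_rpow_sub_rpow_mul_rpow hγ hαγ₁).union
    (integrableOn_Ioi_sq_one_add_rpow_sub_rpow_mul_rpow (by linarith) hαγ₂)
  rw [Ioc_union_Ioi_eq_Ioi zero_le_one] at hrpow
  refine hrpow.congr_fun (fun u hu => ?_) measurableSet_Ioi
  rw [plusPow_of_pos hu, plusPow_of_pos (by linarith [mem_Ioi.1 hu])]

section NegSplit

variable {E : Type*} [NormedAddCommGroup E] {f : ℝ → E}

lemma integrableOn_Iic_of_integrableOn_Ioi_comp_neg
    (hf : IntegrableOn (fun x => f (-x)) (Ioi 0)) : IntegrableOn f (Iic 0) := by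
  rw [← integrableOn_Ici_iff_integrableOn_Ioi] at hf
  refine (MeasurePreserving.integrableOn_comp_preimage (Measure.measurePreserving_neg volume)
    (Homeomorph.neg ℝ).measurableEmbedding).1 ?_
  simpa [Function.comp_def] using hf

lemma integrable_of_integrableOn_Ioi_comp_neg (hneg : IntegrableOn (fun x => f (-x)) (Ioi 0))
    (hpos : IntegrableOn f (Ioi 0)) : Integrable f := by
  rw [← integrableOn_univ, ← Iic_union_Ioi (a := 0)]
  exact (integrableOn_Iic_of_integrableOn_Ioi_comp_neg hneg).union hpos

lemma integral_eq_integral_Ioi_comp_neg_add [NormedSpace ℝ E]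
    (hneg : IntegrableOn (fun x => f (-x)) (Ioi 0))
    (hpos : IntegrableOn f (Ioi 0)) :
    ∫ x, f x = (∫ x in Ioi 0, f (-x)) + ∫ x in Ioi 0, f x := by
  rw [integral_comp_neg_Ioi, neg_zero, intervalIntegral.integral_Iic_add_Ioi
    (integrableOn_Iic_of_integrableOn_Ioi_comp_neg hneg) hpos]

end NegSplit

section UnitTime

variable {α γ : ℝ}

lemma gfbmIntegrand_one_of_mem_Ioi_sdiff_Ioo {u : ℝ} (hu : u ∈ Ioi 0 \ Ioo 0 1) :
    gfbmIntegrand α γ 1 u = 0 :=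
  gfbmIntegrand_one_of_one_le α γ (not_lt.1 fun h => hu.2 ⟨hu.1, h⟩)

lemma integrableOn_Ioi_gfbmIntegrand_one (hα : -1 < 2 * α) (hγ : γ < 1) :
    IntegrableOn (gfbmIntegrand α γ 1) (Ioi 0) :=
  ((integrableOn_rpow_mul_one_sub_rpow (by linarith) hα).congr_fun
    (fun _ hu => (gfbmIntegrand_one_of_mem_Ioo α γ hu).symm)
    measurableSet_Ioo).of_forall_sdiff_eq_zero measurableSet_Ioi
    fun _ => gfbmIntegrand_one_of_mem_Ioi_sdiff_Ioo

lemma integral_Ioi_gfbmIntegrand_one :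
    ∫ u in Ioi 0, gfbmIntegrand α γ 1 u = betaFn (2 * α + 1) (1 - γ) := by
  rw [setIntegral_eq_of_subset_of_forall_sdiff_eq_zero measurableSet_Ioi Ioo_subset_Ioi_self
    fun _ => gfbmIntegrand_one_of_mem_Ioi_sdiff_Ioo,
    setIntegral_congr_fun measurableSet_Ioo fun u hu => gfbmIntegrand_one_of_mem_Ioo α γ hu,
    betaFn_comm, betaFn, add_sub_cancel_right, sub_sub_cancel_left]

variable (hα : -1 < 2 * α) (hγ : γ < 1) (hH₀ : -1 < 2 * α - γ) (hH₁ : 2 * α - γ < 1)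
include hγ hH₀ hH₁

lemma integrableOn_Ioi_gfbmIntegrand_one_neg :
    IntegrableOn (fun v => gfbmIntegrand α γ 1 (-v)) (Ioi 0) :=
  (integrableOn_Ioi_sq_plusPow_one_add_sub_mul_rpow hγ hH₀ hH₁).congr_fun
    (fun _ hv => (gfbmIntegrand_one_neg α γ hv).symm) measurableSet_Ioi

include hα

lemma integrable_gfbmIntegrand_one : Integrable (gfbmIntegrand α γ 1) :=
  integrable_of_integrableOn_Ioi_comp_neg (integrableOn_Ioi_gfbmIntegrand_one_neg hγ hH₀ hH₁)
    (integrableOn_Ioi_gfbmIntegrand_one hα hγ)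

lemma integral_gfbmIntegrand_one :
    ∫ u, gfbmIntegrand α γ 1 u = betaFn (2 * α + 1) (1 - γ) +
      ∫ v in Ioi (0 : ℝ), (plusPow (1 + v) α - plusPow v α) ^ 2 * v ^ (-γ) := by
  rw [integral_eq_integral_Ioi_comp_neg_add (integrableOn_Ioi_gfbmIntegrand_one_neg hγ hH₀ hH₁)
    (integrableOn_Ioi_gfbmIntegrand_one hα hγ), add_comm, integral_Ioi_gfbmIntegrand_one,
    setIntegral_congr_fun measurableSet_Ioi fun v hv => gfbmIntegrand_one_neg α γ hv]

end UnitTime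

lemma integrable_gfbmIntegrand {α γ t : ℝ} (ht : 0 < t)
    (h : Integrable (gfbmIntegrand α γ 1)) : Integrable (gfbmIntegrand α γ t) := by
  rw [← integrable_comp_mul_left_iff _ ht.ne']
  simpa only [gfbmIntegrand_mul ht] using h.const_mul (t ^ (2 * α - γ))

lemma integral_gfbmIntegrand {t : ℝ} (ht : 0 < t) (α γ : ℝ) :
    ∫ u, gfbmIntegrand α γ t u = t ^ (2 * α - γ + 1) * ∫ u, gfbmIntegrand α γ 1 u := by
  have hscale := Measure.integral_comp_mul_left (gfbmIntegrand α γ t) t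
  rw [abs_inv, abs_of_pos ht, smul_eq_mul] at hscale
  simp only [gfbmIntegrand_mul ht, integral_const_mul] at hscale
  rw [rpow_add_one ht.ne', mul_right_comm, hscale]
  field_simp

/-- Variance and self-similarity of GFBM: `E[X(t)²] = c(α,γ) t^{2H}`. -/
theorem gfbm_variance (γ α : ℝ) (hγ0 : 0 ≤ γ) (hγ1 : γ < 1)
    (hα1 : -(1/2) + γ/2 < α) (hα2 : α < 1/2 + γ/2) :
    IntegrableOn (fun u : ℝ => u ^ (2*α+1-1) * (1-u) ^ (1-γ-1)) (Set.Ioo 0 1) ∧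
    IntegrableOn (fun u : ℝ => (plusPow (1+u) α - plusPow u α)^2 * u ^ (-γ)) (Set.Ioi 0) ∧
    ∀ t : ℝ, 0 ≤ t →
      Integrable (fun u : ℝ => (plusPow (t-u) α - plusPow (-u) α)^2 * |u| ^ (-γ)) ∧
      ∫ u : ℝ, (plusPow (t-u) α - plusPow (-u) α)^2 * |u| ^ (-γ) =
        (betaFn (2*α+1) (1-γ) +
          ∫ u in Set.Ioi (0:ℝ), (plusPow (1+u) α - plusPow u α)^2 * u ^ (-γ)) *
        t ^ (2*(α - γ/2 + 1/2)) := by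
  have hα : -1 < 2 * α := by linarith
  have hH₀ : -1 < 2 * α - γ := by linarith
  have hH₁ : 2 * α - γ < 1 := by linarith
  refine ⟨?_, integrableOn_Ioi_sq_plusPow_one_add_sub_mul_rpow hγ1 hH₀ hH₁, fun t ht => ?_⟩
  · simpa only [add_sub_cancel_right, sub_sub_cancel_left] using
      integrableOn_rpow_mul_one_sub_rpow hα (by linarith : -1 < -γ)
  change Integrable (gfbmIntegrand α γ t) ∧ ∫ u, gfbmIntegrand α γ t u = _
  rcases ht.eq_or_lt with rfl | ht
  · rw [gfbmIntegrand_zero_left, zero_rpow (by linarith)]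
    simp
  have hunit := integrable_gfbmIntegrand_one hα hγ1 hH₀ hH₁
  refine ⟨integrable_gfbmIntegrand ht hunit, ?_⟩
  rw [integral_gfbmIntegrand ht, integral_gfbmIntegrand_one hα hγ1 hH₀ hH₁, mul_comm,
    show 2 * (α - γ / 2 + 1 / 2) = 2 * α - γ + 1 by ring]
end

section
/- Let γ ∈ [0,1) and α ∈ (−1/2 + γ/2, 1/2 + γ/2), and set H = α − γ/2 + 1/2. Then the constant c := α² ∫₀^∞ (1+u)^{2α−2} u^{−γ} du is finite, and for all 0 < s < t < ∞ one has c · (t−s)² / t^{2−2H} ≤ ∫₀^∞ ((t+u)^α − (s+u)^α)² u^{−γ} du ≤ c · (t−s)² / s^{2−2H}. -/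
open MeasureTheory Set Real

open Set Real in
lemma aux_meas (c d : ℝ) (s : ℝ) : Measurable (fun u : ℝ => (s+u) ^ c * u ^ d) :=
  ((measurable_const.add measurable_id).pow measurable_const).mul
    (measurable_id.pow measurable_const)

lemma aux_int (γ α : ℝ) (hγ0 : 0 ≤ γ) (hγ1 : γ < 1) (hα2 : α < 1/2 + γ/2) :
    IntegrableOn (fun u : ℝ => (1+u) ^ (2*α-2) * u ^ (-γ)) (Set.Ioi 0) := by
  have hexp : 2*α - 2 ≤ 0 := by linarith
  have hmeas := aux_meas (2*α-2) (-γ) 1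
  have h1 : IntegrableOn (fun u : ℝ => (1+u) ^ (2*α-2) * u ^ (-γ)) (Ioc 0 1) := by
    rw [integrableOn_Ioc_iff_integrableOn_Ioo]
    have hint : IntegrableOn (fun u : ℝ => u ^ (-γ)) (Ioo (0:ℝ) 1) :=
      (intervalIntegral.integrableOn_Ioo_rpow_iff one_pos).mpr (by linarith)
    apply hint.mono' hmeas.aestronglyMeasurable
    filter_upwards [ae_restrict_mem measurableSet_Ioo] with u hu
    have hu0 : 0 < u := hu.1
    have h1u : (1:ℝ) ≤ 1 + u := by linarith
    rw [Real.norm_eq_abs, abs_of_nonneg (by positivity)]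
    calc (1+u) ^ (2*α-2) * u ^ (-γ)
        ≤ 1 * u ^ (-γ) :=
          mul_le_mul_of_nonneg_right (rpow_le_one_of_one_le_of_nonpos h1u hexp)
            (rpow_nonneg hu0.le _)
      _ = u ^ (-γ) := one_mul _
  have h2 : IntegrableOn (fun u : ℝ => (1+u) ^ (2*α-2) * u ^ (-γ)) (Ioi 1) := by
    have hint : IntegrableOn (fun u : ℝ => u ^ (2*α-2-γ)) (Ioi (1:ℝ)) :=
      (integrableOn_Ioi_rpow_iff one_pos).mpr (by linarith)
    apply hint.mono' hmeas.aestronglyMeasurable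
    filter_upwards [ae_restrict_mem measurableSet_Ioi] with u hu
    have hu0 : (0:ℝ) < u := lt_trans one_pos hu
    rw [Real.norm_eq_abs, abs_of_nonneg (by positivity)]
    calc (1+u) ^ (2*α-2) * u ^ (-γ)
        ≤ u ^ (2*α-2) * u ^ (-γ) :=
          mul_le_mul_of_nonneg_right (rpow_le_rpow_of_nonpos hu0 (by linarith) hexp)
            (rpow_nonneg hu0.le _)
      _ = u ^ (2*α-2-γ) := by rw [← Real.rpow_add hu0]; ring_nf
  have := h1.union h2
  rwa [Set.Ioc_union_Ioi_eq_Ioi zero_le_one] at this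

lemma aux_eqon (γ α : ℝ) {s : ℝ} (hs : 0 < s) :
    EqOn (fun x : ℝ => (fun u : ℝ => (s+u) ^ (2*α-2) * u ^ (-γ)) (s * x))
      (fun x : ℝ => s ^ (2*α-2) * s ^ (-γ) * ((1+x) ^ (2*α-2) * x ^ (-γ))) (Ioi 0) := by
  intro x hx
  have hx0 : 0 < x := hx
  simp only
  have h1 : s + s * x = s * (1 + x) := by ring
  rw [h1, Real.mul_rpow hs.le (by positivity), Real.mul_rpow hs.le hx0.le]
  ring

lemma aux_scale_int (γ α : ℝ) (hγ0 : 0 ≤ γ) (hγ1 : γ < 1) (hα2 : α < 1/2 + γ/2)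
    {s : ℝ} (hs : 0 < s) :
    IntegrableOn (fun u : ℝ => (s+u) ^ (2*α-2) * u ^ (-γ)) (Set.Ioi 0) := by
  have h0 := aux_int γ α hγ0 hγ1 hα2
  have h1 : IntegrableOn
      (fun x : ℝ => (fun u : ℝ => (s+u) ^ (2*α-2) * u ^ (-γ)) (s * x)) (Ioi 0) := by
    exact IntegrableOn.congr_fun (h0.const_mul (s ^ (2*α-2) * s ^ (-γ)))
      (fun x hx => (aux_eqon γ α hs hx).symm) measurableSet_Ioi
  have := (integrableOn_Ioi_comp_mul_left_iff
      (fun u : ℝ => (s+u) ^ (2*α-2) * u ^ (-γ)) 0 hs).mp h1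
  rwa [mul_zero] at this

lemma aux_scale (γ α : ℝ) {s : ℝ} (hs : 0 < s) :
    (∫ u in Ioi (0:ℝ), (s+u) ^ (2*α-2) * u ^ (-γ)) =
      s ^ (2*α-1-γ) * ∫ u in Ioi (0:ℝ), (1+u) ^ (2*α-2) * u ^ (-γ) := by
  have h := integral_comp_mul_left_Ioi (fun u : ℝ => (s+u) ^ (2*α-2) * u ^ (-γ)) 0 hs
  rw [mul_zero] at h
  rw [setIntegral_congr_fun measurableSet_Ioi (aux_eqon γ α hs)] at h
  rw [integral_const_mul, smul_eq_mul] at h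
  have hInv : s * (s⁻¹ * ∫ u in Ioi (0:ℝ), (s+u) ^ (2*α-2) * u ^ (-γ))
      = ∫ u in Ioi (0:ℝ), (s+u) ^ (2*α-2) * u ^ (-γ) := by
    field_simp
  rw [← hInv, ← h]
  rw [show (2*α-1-γ) = 1 + (2*α-2) + (-γ) by ring, Real.rpow_add hs, Real.rpow_add hs,
    Real.rpow_one]
  ring

lemma aux_mvt (α : ℝ) (hα : α ≤ 1) {a b : ℝ} (ha : 0 < a) (hab : a < b) :
    α^2 * b ^ (2*α-2) * (b-a)^2 ≤ (b ^ α - a ^ α)^2 ∧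
    (b ^ α - a ^ α)^2 ≤ α^2 * a ^ (2*α-2) * (b-a)^2 := by
  have hcont : ContinuousOn (fun x : ℝ => x ^ α) (Icc a b) := fun x hx =>
    (Real.continuousAt_rpow_const x α (Or.inl (ne_of_gt (lt_of_lt_of_le ha hx.1)))).continuousWithinAt
  have hderiv : ∀ x ∈ Ioo a b, HasDerivAt (fun x : ℝ => x ^ α) (α * x ^ (α-1)) x := fun x hx =>
    Real.hasDerivAt_rpow_const (Or.inl (ne_of_gt (lt_trans ha hx.1)))
  obtain ⟨ξ, hξ, hsl⟩ := exists_hasDerivAt_eq_slope (fun x : ℝ => x ^ α)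
    (fun x => α * x ^ (α-1)) hab hcont hderiv
  have hξ0 : 0 < ξ := lt_trans ha hξ.1
  have hba : b - a ≠ 0 := sub_ne_zero.mpr (ne_of_gt hab)
  have heq : b ^ α - a ^ α = α * ξ ^ (α-1) * (b-a) := by
    field_simp at hsl
    linarith [hsl]
  have hsq : (b ^ α - a ^ α)^2 = α^2 * ξ ^ (2*α-2) * (b-a)^2 := by
    rw [heq]
    have : (ξ ^ (α-1))^2 = ξ ^ (2*α-2) := by
      rw [← Real.rpow_natCast (ξ ^ (α-1)) 2, ← Real.rpow_mul hξ0.le]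
      norm_num; ring_nf
    rw [mul_pow, mul_pow, this]
  have hexp : 2*α - 2 ≤ 0 := by linarith
  have hlow : b ^ (2*α-2) ≤ ξ ^ (2*α-2) :=
    Real.rpow_le_rpow_of_nonpos hξ0 hξ.2.le hexp
  have hhigh : ξ ^ (2*α-2) ≤ a ^ (2*α-2) :=
    Real.rpow_le_rpow_of_nonpos ha hξ.1.le hexp
  constructor
  · rw [hsq]
    nlinarith [sq_nonneg α, sq_nonneg (b-a), mul_le_mul_of_nonneg_left hlow
      (mul_nonneg (sq_nonneg α) (sq_nonneg (b-a)))]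
  · rw [hsq]
    nlinarith [mul_le_mul_of_nonneg_left hhigh
      (mul_nonneg (sq_nonneg α) (sq_nonneg (b-a)))]


/-- Two-sided bound for `E[(Y(t)-Y(s))²] = ∫₀^∞ ((t+u)^α - (s+u)^α)² u^{-γ} du`. -/
theorem Y_increment_variance_bounds (γ α : ℝ) (hγ0 : 0 ≤ γ) (hγ1 : γ < 1)
    (hα1 : -(1/2) + γ/2 < α) (hα2 : α < 1/2 + γ/2) :
    IntegrableOn (fun u : ℝ => (1+u) ^ (2*α-2) * u ^ (-γ)) (Set.Ioi 0) ∧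
    ∀ s t : ℝ, 0 < s → s < t →
      (α^2 * ∫ u in Set.Ioi (0:ℝ), (1+u) ^ (2*α-2) * u ^ (-γ)) * (t-s)^2 /
          t ^ (2 - 2*(α - γ/2 + 1/2)) ≤
        (∫ u in Set.Ioi (0:ℝ), ((t+u)^α - (s+u)^α)^2 * u ^ (-γ)) ∧
      (∫ u in Set.Ioi (0:ℝ), ((t+u)^α - (s+u)^α)^2 * u ^ (-γ)) ≤
        (α^2 * ∫ u in Set.Ioi (0:ℝ), (1+u) ^ (2*α-2) * u ^ (-γ)) * (t-s)^2 /
          s ^ (2 - 2*(α - γ/2 + 1/2)) := by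
  have hα1' : α ≤ 1 := by linarith
  refine ⟨aux_int γ α hγ0 hγ1 hα2, fun s t hs hst => ?_⟩
  have ht : 0 < t := hs.trans hst
  set I := ∫ u in Set.Ioi (0:ℝ), (1+u) ^ (2*α-2) * u ^ (-γ) with hI
  have hpt : ∀ u ∈ Set.Ioi (0:ℝ),
      α^2*(t-s)^2 * ((t+u)^(2*α-2) * u^(-γ)) ≤ ((t+u)^α - (s+u)^α)^2 * u^(-γ)
      ∧ ((t+u)^α - (s+u)^α)^2 * u^(-γ) ≤ α^2*(t-s)^2 * ((s+u)^(2*α-2) * u^(-γ)) := by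
    intro u hu
    have hu0 : 0 < u := hu
    have h := aux_mvt α hα1' (a := s+u) (b := t+u) (by linarith) (by linarith)
    have hb : t + u - (s+u) = t - s := by ring
    rw [hb] at h
    have hγn : 0 ≤ u ^ (-γ) := Real.rpow_nonneg hu0.le _
    constructor
    · calc α^2*(t-s)^2 * ((t+u)^(2*α-2) * u^(-γ))
          = (α^2*(t+u)^(2*α-2)*(t-s)^2) * u^(-γ) := by ring
        _ ≤ ((t+u)^α - (s+u)^α)^2 * u^(-γ) := mul_le_mul_of_nonneg_right h.1 hγn
    · calc ((t+u)^α - (s+u)^α)^2 * u^(-γ)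
          ≤ (α^2*(s+u)^(2*α-2)*(t-s)^2) * u^(-γ) := mul_le_mul_of_nonneg_right h.2 hγn
        _ = α^2*(t-s)^2 * ((s+u)^(2*α-2) * u^(-γ)) := by ring
  have hIs := aux_scale_int γ α hγ0 hγ1 hα2 hs
  have hIt := aux_scale_int γ α hγ0 hγ1 hα2 ht
  have hmeasM : Measurable (fun u : ℝ => ((t+u)^α - (s+u)^α)^2 * u^(-γ)) :=
    ((((measurable_const.add measurable_id).pow measurable_const).sub
      ((measurable_const.add measurable_id).pow measurable_const)).pow measurable_const).mul
      (measurable_id.pow measurable_const)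
  have hM : IntegrableOn (fun u : ℝ => ((t+u)^α - (s+u)^α)^2 * u^(-γ)) (Set.Ioi 0) := by
    apply (hIs.const_mul (α^2*(t-s)^2)).mono' hmeasM.aestronglyMeasurable
    filter_upwards [ae_restrict_mem measurableSet_Ioi] with u hu
    have hu0 : 0 < u := hu
    rw [Real.norm_eq_abs, abs_of_nonneg (by positivity)]
    exact (hpt u hu).2
  have hlow : α^2*(t-s)^2 * (t ^ (2*α-1-γ) * I)
      ≤ ∫ u in Set.Ioi (0:ℝ), ((t+u)^α - (s+u)^α)^2 * u^(-γ) := by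
    have h := setIntegral_mono_on (hIt.const_mul (α^2*(t-s)^2)) hM measurableSet_Ioi
      (fun u hu => (hpt u hu).1)
    rwa [integral_const_mul, aux_scale γ α ht, ← hI] at h
  have hhigh : (∫ u in Set.Ioi (0:ℝ), ((t+u)^α - (s+u)^α)^2 * u^(-γ))
      ≤ α^2*(t-s)^2 * (s ^ (2*α-1-γ) * I) := by
    have h := setIntegral_mono_on hM (hIs.const_mul (α^2*(t-s)^2)) measurableSet_Ioi
      (fun u hu => (hpt u hu).2)
    rwa [integral_const_mul, aux_scale γ α hs, ← hI] at h
  constructor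
  · rw [show (2 - 2*(α - γ/2 + 1/2)) = -(2*α-1-γ) from by ring, Real.rpow_neg ht.le,
      div_eq_mul_inv, inv_inv]
    calc (α^2 * I) * (t-s)^2 * t^(2*α-1-γ)
        = α^2*(t-s)^2 * (t^(2*α-1-γ) * I) := by ring
      _ ≤ _ := hlow
  · rw [show (2 - 2*(α - γ/2 + 1/2)) = -(2*α-1-γ) from by ring, Real.rpow_neg hs.le,
      div_eq_mul_inv, inv_inv]
    calc (∫ u in Set.Ioi (0:ℝ), ((t+u)^α - (s+u)^α)^2 * u^(-γ))
        ≤ α^2*(t-s)^2 * (s^(2*α-1-γ) * I) := hhigh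
      _ = (α^2 * I) * (t-s)^2 * s^(2*α-1-γ) := by ring
end

section
/- Let α ∈ (−1/2, 1/2] and γ ∈ [0,1). If 0 < s < t < ∞ and 0 < s ≤ 2(t−s), then (1/(2α+1)) · (t−s)^{2α+1} / t^γ ≤ Φ(s,t) ≤ c · (t−s)^{2α+1} / s^γ, where c = 2/(1−γ) + 1/(2α+1) + B(2α+1, 1−γ) · 2^{2α+1}. -/
open MeasureTheory

section Aux
open Set

private lemma aux_integrableOn_rpow_Ioo {r : ℝ} (hr : -1 < r) (a : ℝ) :
    IntegrableOn (fun x : ℝ => x ^ r) (Ioo 0 a) := by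
  have h := intervalIntegral.intervalIntegrable_rpow' (a := 0) (b := a) hr
  exact h.1.mono_set Ioo_subset_Ioc_self

private lemma aux_integrableOn_sub_rpow {r : ℝ} (hr : -1 < r) (s t : ℝ) :
    IntegrableOn (fun u : ℝ => (t - u) ^ r) (Ioo s t) := by
  have h := (intervalIntegral.intervalIntegrable_rpow' (a := 0) (b := t - s) hr).comp_sub_left t
  simp only [sub_zero, sub_sub_cancel] at h
  exact h.2.mono_set Ioo_subset_Ioc_self

private lemma aux_integral_sub_rpow {r : ℝ} (hr : -1 < r) {s t : ℝ} (hst : s ≤ t) :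
    ∫ u in Ioo s t, (t - u) ^ r = (t - s) ^ (r + 1) / (r + 1) := by
  rw [← integral_Ioc_eq_integral_Ioo, ← intervalIntegral.integral_of_le hst]
  rw [intervalIntegral.integral_comp_sub_left (fun x => x ^ r) t]
  rw [sub_self, integral_rpow (Or.inl hr)]
  rw [Real.zero_rpow (by linarith), sub_zero]

private lemma aux_integral_rpow_Ioo {r : ℝ} (hr : -1 < r) {a : ℝ} (ha : 0 ≤ a) :
    ∫ u in Ioo 0 a, u ^ r = a ^ (r + 1) / (r + 1) := by
  rw [← integral_Ioc_eq_integral_Ioo, ← intervalIntegral.integral_of_le ha]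
  rw [integral_rpow (Or.inl hr), Real.zero_rpow (by linarith), sub_zero]

private lemma aux_integrableOn_rpow_mul_sub_rpow {p q a : ℝ} (hp : -1 < p) (hq : -1 < q)
    (ha : 0 < a) :
    IntegrableOn (fun w : ℝ => w ^ p * (a - w) ^ q) (Ioo 0 a) := by
  have hmeas : AEStronglyMeasurable (fun w : ℝ => w ^ p * (a - w) ^ q)
      (volume.restrict (Ioo (0:ℝ) a)) := by
    apply Measurable.aestronglyMeasurable
    fun_prop
  have hsplit : Ioo (0:ℝ) a ⊆ Ioo 0 (a/2) ∪ Ico (a/2) a := by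
    intro x hx
    rcases lt_or_ge x (a/2) with h | h
    · exact Or.inl ⟨hx.1, h⟩
    · exact Or.inr ⟨h, hx.2⟩
  refine IntegrableOn.mono_set ?_ hsplit
  apply IntegrableOn.union
  · refine Integrable.mono' (((aux_integrableOn_rpow_Ioo hp (a/2)).const_mul (a^q + (a/2)^q)))
      (hmeas.mono_set (Ioo_subset_Ioo_right (by linarith))) ?_
    rw [ae_restrict_iff' measurableSet_Ioo]
    refine ae_of_all _ fun w hw => ?_
    have hw0 : 0 < w := hw.1
    have hwa : w < a / 2 := hw.2
    have h1 : 0 < a - w := by linarith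
    have h2 : (a - w) ^ q ≤ a ^ q + (a/2) ^ q := by
      rcases le_or_gt 0 q with hq0 | hq0
      · have : (a - w) ^ q ≤ a ^ q := Real.rpow_le_rpow h1.le (by linarith) hq0
        nlinarith [Real.rpow_nonneg (by positivity : (0:ℝ) ≤ a/2) q]
      · have : (a - w) ^ q ≤ (a/2) ^ q :=
          Real.rpow_le_rpow_of_nonpos (by positivity) (by linarith) hq0.le
        nlinarith [Real.rpow_nonneg ha.le q]
    rw [Real.norm_eq_abs, abs_of_nonneg (by positivity)]
    calc w ^ p * (a - w) ^ q ≤ w ^ p * (a^q + (a/2)^q) :=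
          mul_le_mul_of_nonneg_left h2 (Real.rpow_nonneg hw0.le p)
      _ = (a^q + (a/2)^q) * w ^ p := mul_comm _ _
  · have hbase : IntegrableOn (fun w : ℝ => (a - w) ^ q) (Ico (a/2) a) := by
      have := aux_integrableOn_sub_rpow hq (a/2) a
      exact this.congr_set_ae Ioo_ae_eq_Ico.symm
    have hsub : Ico (a/2) a ⊆ Ioo 0 a := fun x hx => ⟨lt_of_lt_of_le (half_pos ha) hx.1, hx.2⟩
    refine Integrable.mono' (hbase.const_mul ((a/2)^p + a^p)) (hmeas.mono_set hsub) ?_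
    rw [ae_restrict_iff' measurableSet_Ico]
    refine ae_of_all _ fun w hw => ?_
    have hw0 : 0 < w := lt_of_lt_of_le (by positivity) hw.1
    have h1 : 0 < a - w := by linarith [hw.2]
    have h2 : w ^ p ≤ (a/2)^p + a^p := by
      rcases le_or_gt 0 p with hp0 | hp0
      · have : w ^ p ≤ a ^ p := Real.rpow_le_rpow hw0.le (by linarith [hw.2]) hp0
        nlinarith [Real.rpow_nonneg (by positivity : (0:ℝ) ≤ a/2) p]
      · have : w ^ p ≤ (a/2) ^ p :=
          Real.rpow_le_rpow_of_nonpos (by positivity) hw.1 hp0.le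
        nlinarith [Real.rpow_nonneg ha.le p]
    rw [Real.norm_eq_abs, abs_of_nonneg (by positivity)]
    exact mul_le_mul_of_nonneg_right h2 (Real.rpow_nonneg h1.le q)

private lemma aux_integral_sub_rpow_mul_rpow {p q s : ℝ} (hs : 0 < s) :
    ∫ u in Ioo 0 s, (s - u) ^ p * u ^ q
      = s ^ (p + q + 1) * ∫ w in Ioo (0:ℝ) 1, w ^ p * (1 - w) ^ q := by
  rw [← integral_Ioc_eq_integral_Ioo, ← intervalIntegral.integral_of_le hs.le,
    ← integral_Ioc_eq_integral_Ioo (f := fun w : ℝ => w ^ p * (1 - w) ^ q) (x := (0:ℝ)) (y := 1),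
    ← intervalIntegral.integral_of_le (zero_le_one (α := ℝ))]
  have hsub := intervalIntegral.integral_comp_sub_left (a := 0) (b := s)
      (fun x => x ^ p * (s - x) ^ q) s
  simp only [sub_sub_cancel, sub_self, sub_zero] at hsub
  have hmul := intervalIntegral.integral_comp_mul_left (a := 0) (b := 1)
      (c := s) (f := fun x => x ^ p * (s - x) ^ q) (ne_of_gt hs)
  simp only [mul_zero, mul_one] at hmul
  calc ∫ u in (0:ℝ)..s, (s - u) ^ p * u ^ q
      = ∫ x in (0:ℝ)..s, x ^ p * (s - x) ^ q := hsub
    _ = s • ∫ w in (0:ℝ)..1, (s * w) ^ p * (s - s * w) ^ q := by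
        rw [hmul, smul_smul, mul_inv_cancel₀ (ne_of_gt hs), one_smul]
    _ = s • ∫ w in (0:ℝ)..1, (s ^ p * s ^ q) * (w ^ p * (1 - w) ^ q) := by
        congr 1
        apply intervalIntegral.integral_congr
        intro w hw
        rw [uIcc_of_le (zero_le_one (α := ℝ))] at hw
        have hw0 : 0 ≤ w := hw.1
        have hw1 : w ≤ 1 := hw.2
        simp only
        rw [Real.mul_rpow hs.le hw0, show s - s * w = s * (1 - w) by ring,
          Real.mul_rpow hs.le (by linarith)]
        ring
    _ = s ^ (p + q + 1) * ∫ w in (0:ℝ)..1, w ^ p * (1 - w) ^ q := by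
        rw [intervalIntegral.integral_const_mul, smul_eq_mul,
          Real.rpow_add hs, Real.rpow_add hs, Real.rpow_one]
        ring

private lemma aux_rpow_add_le {b c α : ℝ} (hb : 0 ≤ b) (hc : 0 ≤ c) (h0 : 0 ≤ α) (h1 : α ≤ 1) :
    (b + c) ^ α ≤ b ^ α + c ^ α := by
  have h := NNReal.rpow_add_le_add_rpow b.toNNReal c.toNNReal h0 h1
  have h' := NNReal.coe_le_coe.2 h
  push_cast at h'
  rwa [Real.coe_toNNReal b hb, Real.coe_toNNReal c hc] at h'

private lemma aux_ae_le {a b : ℝ} {f g : ℝ → ℝ} (h : ∀ u ∈ Set.Ioo a b, f u ≤ g u) :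
    f ≤ᵐ[MeasureTheory.volume.restrict (Set.Ioo a b)] g :=
  (ae_restrict_iff' measurableSet_Ioo).2 (ae_of_all _ h)

private lemma aux_ae_nonneg {a b : ℝ} {f : ℝ → ℝ} (h : ∀ u ∈ Set.Ioo a b, 0 ≤ f u) :
    0 ≤ᵐ[MeasureTheory.volume.restrict (Set.Ioo a b)] f :=
  (ae_restrict_iff' measurableSet_Ioo).2 (ae_of_all _ h)

private lemma aux_rpow_two_mul {x r : ℝ} (hx : 0 ≤ x) : x ^ (2 * r) = (x ^ r) ^ 2 := by
  rw [show (2:ℝ) * r = r * 2 by ring, Real.rpow_mul hx, Real.rpow_two]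

end Aux

/-- The second-moment function
`Φ(s,t) = ∫₀^s ((t-u)^α - (s-u)^α)² u^{-γ} du + ∫_s^t (t-u)^{2α} u^{-γ} du`,
which equals `E[(Z(t)-Z(s))²]` for the generalized Riemann–Liouville FBM `Z`. -/
noncomputable def Phi (α γ s t : ℝ) : ℝ :=
  (∫ u in Set.Ioo (0:ℝ) s, ((t-u) ^ α - (s-u) ^ α)^2 * u ^ (-γ)) +
    ∫ u in Set.Ioo s t, (t-u) ^ (2*α) * u ^ (-γ)

/-- Two-sided bound for `E[(Z(t)-Z(s))²]` when `0 < s ≤ 2(t-s)`. -/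
theorem Z_increment_bound_near_origin (α γ : ℝ)
    (hα1 : -(1/2) < α) (hα2 : α ≤ 1/2) (hγ0 : 0 ≤ γ) (hγ1 : γ < 1)
    (s t : ℝ) (hs : 0 < s) (hst : s < t) (h2 : s ≤ 2*(t-s)) :
    (1/(2*α+1)) * (t-s) ^ (2*α+1) / t ^ γ ≤ Phi α γ s t ∧
    Phi α γ s t ≤
      (2/(1-γ) + 1/(2*α+1) + betaFn (2*α+1) (1-γ) * 2 ^ (2*α+1)) *
        (t-s) ^ (2*α+1) / s ^ γ := by
  have ht : 0 < t := hs.trans hst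
  have hh : 0 < t - s := by linarith
  have h2a : 0 < 2*α + 1 := by linarith
  have hγ' : (-1:ℝ) < -γ := by linarith
  have h2α : (-1:ℝ) < 2*α := by linarith
  have hγ1' : 0 < 1 - γ := by linarith
  -- value of ∫_s^t (t-u)^{2α}
  have hA : ∫ u in Set.Ioo s t, (t-u) ^ (2*α) = (t-s) ^ (2*α+1) / (2*α+1) :=
    aux_integral_sub_rpow h2α hst.le
  -- integrability of the second integrand
  have hI2meas : AEStronglyMeasurable (fun u : ℝ => (t-u) ^ (2*α) * u ^ (-γ))
      (volume.restrict (Set.Ioo s t)) := by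
    apply Measurable.aestronglyMeasurable; fun_prop
  have hI2int : IntegrableOn (fun u : ℝ => (t-u) ^ (2*α) * u ^ (-γ)) (Set.Ioo s t) := by
    refine Integrable.mono' ((aux_integrableOn_sub_rpow h2α s t).const_mul (s ^ (-γ)))
      hI2meas ?_
    rw [ae_restrict_iff' measurableSet_Ioo]
    refine ae_of_all _ fun u hu => ?_
    have hu1 : 0 < u := hs.trans hu.1
    have hu2 : 0 < t - u := by linarith [hu.2]
    rw [Real.norm_eq_abs, abs_of_nonneg (by positivity)]
    calc (t-u) ^ (2*α) * u ^ (-γ) ≤ (t-u) ^ (2*α) * s ^ (-γ) :=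
          mul_le_mul_of_nonneg_left
            (Real.rpow_le_rpow_of_nonpos hs hu.1.le (by linarith))
            (Real.rpow_nonneg hu2.le _)
      _ = s ^ (-γ) * (t-u) ^ (2*α) := mul_comm _ _
  have hXS : (0:ℝ) ≤ (t-s) ^ (2*α+1) := Real.rpow_nonneg hh.le _
  have hS : (0:ℝ) ≤ s ^ (-γ) := Real.rpow_nonneg hs.le _
  constructor
  · -- lower bound
    have hI1nonneg : 0 ≤ ∫ u in Set.Ioo (0:ℝ) s, ((t-u) ^ α - (s-u) ^ α)^2 * u ^ (-γ) :=
      setIntegral_nonneg measurableSet_Ioo fun u hu =>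
        mul_nonneg (sq_nonneg _) (Real.rpow_nonneg hu.1.le _)
    have hmono : ∫ u in Set.Ioo s t, t ^ (-γ) * (t-u) ^ (2*α)
        ≤ ∫ u in Set.Ioo s t, (t-u) ^ (2*α) * u ^ (-γ) := by
      apply integral_mono_of_nonneg
      · refine (ae_restrict_iff' measurableSet_Ioo).2 (ae_of_all _ fun u hu => ?_)
        have hu2 : 0 < t - u := by linarith [hu.2]
        positivity
      · exact hI2int
      · refine (ae_restrict_iff' measurableSet_Ioo).2 (ae_of_all _ fun u hu => ?_)
        have hu1 : 0 < u := hs.trans hu.1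
        have hu2 : 0 < t - u := by linarith [hu.2]
        calc t ^ (-γ) * (t-u) ^ (2*α) = (t-u) ^ (2*α) * t ^ (-γ) := mul_comm _ _
          _ ≤ (t-u) ^ (2*α) * u ^ (-γ) :=
            mul_le_mul_of_nonneg_left
              (Real.rpow_le_rpow_of_nonpos hu1 hu.2.le (by linarith))
              (Real.rpow_nonneg hu2.le _)
    rw [MeasureTheory.integral_const_mul, hA] at hmono
    have hkey : t ^ (-γ) * ((t-s) ^ (2*α+1) / (2*α+1))
        = 1/(2*α+1) * (t-s) ^ (2*α+1) / t ^ γ := by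
      rw [Real.rpow_neg ht.le]
      ring
    rw [hkey] at hmono
    unfold Phi
    linarith
  · -- upper bound
    have hBnonneg : 0 ≤ betaFn (2*α+1) (1-γ) := by
      apply setIntegral_nonneg measurableSet_Ioo
      intro u hu
      exact mul_nonneg (Real.rpow_nonneg hu.1.le _)
        (Real.rpow_nonneg (by linarith [hu.2]) _)
    -- I₂ upper bound
    have hI2up : ∫ u in Set.Ioo s t, (t-u) ^ (2*α) * u ^ (-γ)
        ≤ 1/(2*α+1) * ((t-s) ^ (2*α+1) * s ^ (-γ)) := by
      have : ∫ u in Set.Ioo s t, (t-u) ^ (2*α) * u ^ (-γ)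
          ≤ ∫ u in Set.Ioo s t, s ^ (-γ) * (t-u) ^ (2*α) := by
        apply integral_mono_of_nonneg
        · refine (ae_restrict_iff' measurableSet_Ioo).2 (ae_of_all _ fun u hu => ?_)
          have hu1 : 0 < u := hs.trans hu.1
          have hu2 : 0 < t - u := by linarith [hu.2]
          positivity
        · exact (aux_integrableOn_sub_rpow h2α s t).const_mul _
        · refine (ae_restrict_iff' measurableSet_Ioo).2 (ae_of_all _ fun u hu => ?_)
          have hu1 : 0 < u := hs.trans hu.1
          have hu2 : 0 < t - u := by linarith [hu.2]
          calc (t-u) ^ (2*α) * u ^ (-γ) ≤ (t-u) ^ (2*α) * s ^ (-γ) :=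
                mul_le_mul_of_nonneg_left
                  (Real.rpow_le_rpow_of_nonpos hs hu.1.le (by linarith))
                  (Real.rpow_nonneg hu2.le _)
            _ = s ^ (-γ) * (t-u) ^ (2*α) := mul_comm _ _
      rw [MeasureTheory.integral_const_mul, hA] at this
      calc ∫ u in Set.Ioo s t, (t-u) ^ (2*α) * u ^ (-γ)
          ≤ s ^ (-γ) * ((t-s) ^ (2*α+1) / (2*α+1)) := this
        _ = 1/(2*α+1) * ((t-s) ^ (2*α+1) * s ^ (-γ)) := by ring
    -- I₁ upper bound
    have hI1up : ∫ u in Set.Ioo (0:ℝ) s, ((t-u) ^ α - (s-u) ^ α)^2 * u ^ (-γ)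
        ≤ (2/(1-γ) + betaFn (2*α+1) (1-γ) * 2 ^ (2*α+1)) * ((t-s) ^ (2*α+1) * s ^ (-γ)) := by
      rcases le_or_gt 0 α with hα0 | hα0
      · -- case α ≥ 0
        have hstep : ∫ u in Set.Ioo (0:ℝ) s, ((t-u) ^ α - (s-u) ^ α)^2 * u ^ (-γ)
            ≤ ∫ u in Set.Ioo (0:ℝ) s, (t-s) ^ (2*α) * u ^ (-γ) := by
          apply integral_mono_of_nonneg
          · refine (ae_restrict_iff' measurableSet_Ioo).2 (ae_of_all _ fun u hu => ?_)
            exact mul_nonneg (sq_nonneg _) (Real.rpow_nonneg hu.1.le _)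
          · exact (aux_integrableOn_rpow_Ioo hγ' s).const_mul _
          · refine (ae_restrict_iff' measurableSet_Ioo).2 (ae_of_all _ fun u hu => ?_)
            have hu1 : 0 < u := hu.1
            have hsu : 0 < s - u := by linarith [hu.2]
            have htu : 0 < t - u := by linarith [hu.2]
            have hd1 : (s-u) ^ α ≤ (t-u) ^ α :=
              Real.rpow_le_rpow hsu.le (by linarith) hα0
            have hd2 : (t-u) ^ α ≤ (s-u) ^ α + (t-s) ^ α := by
              have h := aux_rpow_add_le hsu.le hh.le hα0 (by linarith)
              rwa [show s - u + (t - s) = t - u by ring] at h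
            have hsq : ((t-u) ^ α - (s-u) ^ α)^2 ≤ ((t-s) ^ α)^2 := by
              apply sq_le_sq'
              · have := Real.rpow_nonneg hh.le α
                linarith
              · linarith
            show ((t-u) ^ α - (s-u) ^ α)^2 * u ^ (-γ) ≤ (t-s) ^ (2*α) * u ^ (-γ)
            rw [aux_rpow_two_mul hh.le]
            exact mul_le_mul_of_nonneg_right hsq (Real.rpow_nonneg hu1.le _)
        rw [MeasureTheory.integral_const_mul, aux_integral_rpow_Ioo hγ' hs.le] at hstep
        have hs1 : s ^ (-γ + 1) = s ^ (-γ) * s := by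
          rw [Real.rpow_add hs, Real.rpow_one]
        have hts1 : (t-s) ^ (2*α+1) = (t-s) ^ (2*α) * (t-s) := by
          rw [Real.rpow_add hh, Real.rpow_one]
        have hX : (0:ℝ) ≤ (t-s) ^ (2*α) := Real.rpow_nonneg hh.le _
        have hterm : 0 ≤ betaFn (2*α+1) (1-γ) * 2 ^ (2*α+1) :=
          mul_nonneg hBnonneg (Real.rpow_nonneg (by norm_num) _)
        have hbd : (t-s) ^ (2*α) * (s ^ (-γ + 1) / (-γ + 1))
            ≤ 2/(1-γ) * ((t-s) ^ (2*α+1) * s ^ (-γ)) := by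
          rw [hs1, hts1]
          have h1 : (t-s) ^ (2*α) * (s ^ (-γ) * s) ≤ (t-s) ^ (2*α) * (s ^ (-γ) * (2*(t-s))) := by
            apply mul_le_mul_of_nonneg_left _ hX
            exact mul_le_mul_of_nonneg_left h2 hS
          calc (t-s) ^ (2*α) * (s ^ (-γ) * s / (-γ + 1))
              = (t-s) ^ (2*α) * (s ^ (-γ) * s) * (1/(1-γ)) := by ring
            _ ≤ (t-s) ^ (2*α) * (s ^ (-γ) * (2*(t-s))) * (1/(1-γ)) :=
                mul_le_mul_of_nonneg_right h1 (by positivity)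
            _ = 2/(1-γ) * ((t-s) ^ (2*α) * (t-s) * s ^ (-γ)) := by ring
        nlinarith [mul_nonneg hXS hS]
      · -- case α < 0
        have hstep : ∫ u in Set.Ioo (0:ℝ) s, ((t-u) ^ α - (s-u) ^ α)^2 * u ^ (-γ)
            ≤ ∫ u in Set.Ioo (0:ℝ) s, (s-u) ^ (2*α) * u ^ (-γ) := by
          apply integral_mono_of_nonneg
          · refine (ae_restrict_iff' measurableSet_Ioo).2 (ae_of_all _ fun u hu => ?_)
            exact mul_nonneg (sq_nonneg _) (Real.rpow_nonneg hu.1.le _)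
          · have hbase := aux_integrableOn_rpow_mul_sub_rpow hγ' h2α hs
            exact hbase.congr (ae_of_all _ fun x => mul_comm _ _)
          · refine (ae_restrict_iff' measurableSet_Ioo).2 (ae_of_all _ fun u hu => ?_)
            have hu1 : 0 < u := hu.1
            have hsu : 0 < s - u := by linarith [hu.2]
            have htu : 0 < t - u := by linarith [hu.2]
            have hd1 : (t-u) ^ α ≤ (s-u) ^ α :=
              Real.rpow_le_rpow_of_nonpos hsu (by linarith) hα0.le
            have htup : 0 < (t-u) ^ α := Real.rpow_pos_of_pos htu α
            have hsup : 0 ≤ (s-u) ^ α := Real.rpow_nonneg hsu.le α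
            have hsq : ((t-u) ^ α - (s-u) ^ α)^2 ≤ ((s-u) ^ α)^2 := by
              apply sq_le_sq'
              · linarith
              · linarith
            show ((t-u) ^ α - (s-u) ^ α)^2 * u ^ (-γ) ≤ (s-u) ^ (2*α) * u ^ (-γ)
            rw [aux_rpow_two_mul hsu.le]
            exact mul_le_mul_of_nonneg_right hsq (Real.rpow_nonneg hu1.le _)
        have hval : ∫ u in Set.Ioo (0:ℝ) s, (s-u) ^ (2*α) * u ^ (-γ)
            = s ^ (2*α + -γ + 1) * betaFn (2*α+1) (1-γ) := by
          rw [aux_integral_sub_rpow_mul_rpow hs]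
          congr 1
          unfold betaFn
          simp only [add_sub_cancel_right, sub_sub_cancel_left]
        have hsplit : s ^ (2*α + -γ + 1) = s ^ (2*α+1) * s ^ (-γ) := by
          rw [show 2*α + -γ + 1 = (2*α+1) + -γ by ring, Real.rpow_add hs]
        have hsle : s ^ (2*α+1) ≤ 2 ^ (2*α+1) * (t-s) ^ (2*α+1) := by
          calc s ^ (2*α+1) ≤ (2*(t-s)) ^ (2*α+1) :=
                Real.rpow_le_rpow hs.le h2 h2a.le
            _ = 2 ^ (2*α+1) * (t-s) ^ (2*α+1) :=
                Real.mul_rpow (by norm_num) hh.le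
        have hterm : 0 ≤ 2/(1-γ) * ((t-s) ^ (2*α+1) * s ^ (-γ)) := by positivity
        calc ∫ u in Set.Ioo (0:ℝ) s, ((t-u) ^ α - (s-u) ^ α)^2 * u ^ (-γ)
            ≤ s ^ (2*α+1) * s ^ (-γ) * betaFn (2*α+1) (1-γ) := by
              rw [hval, hsplit] at hstep; exact hstep
          _ ≤ (2 ^ (2*α+1) * (t-s) ^ (2*α+1)) * s ^ (-γ) * betaFn (2*α+1) (1-γ) := by
              apply mul_le_mul_of_nonneg_right _ hBnonneg
              exact mul_le_mul_of_nonneg_right hsle hS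
          _ = betaFn (2*α+1) (1-γ) * 2 ^ (2*α+1) * ((t-s) ^ (2*α+1) * s ^ (-γ)) := by ring
          _ ≤ (2/(1-γ) + betaFn (2*α+1) (1-γ) * 2 ^ (2*α+1)) * ((t-s) ^ (2*α+1) * s ^ (-γ)) := by
              nlinarith
    -- combine
    have hgoal : (2/(1-γ) + 1/(2*α+1) + betaFn (2*α+1) (1-γ) * 2 ^ (2*α+1)) *
        (t-s) ^ (2*α+1) / s ^ γ
        = (2/(1-γ) + betaFn (2*α+1) (1-γ) * 2 ^ (2*α+1)) * ((t-s) ^ (2*α+1) * s ^ (-γ))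
          + 1/(2*α+1) * ((t-s) ^ (2*α+1) * s ^ (-γ)) := by
      rw [Real.rpow_neg hs.le]
      ring
    unfold Phi
    rw [hgoal]
    linarith
end

section
/- Let α ∈ (−1/2, 1/2) and γ ∈ [0,1). There exist constants 0 < c ≤ C < ∞, depending only on α and γ, such that for all 0 < s < t < ∞ with s > 2(t−s) one has c · (t−s)^{2α+1} / s^γ ≤ Φ(s,t) ≤ C · (t−s)^{2α+1} / s^γ. -/
open MeasureTheory

open Set Real intervalIntegral
open scoped Interval

lemma rpow_sq_eq_rpow_two_mul {a : ℝ} (ha : 0 ≤ a) (p : ℝ) : (a ^ p) ^ 2 = a ^ (2 * p) := by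
  rw [← rpow_natCast, ← rpow_mul ha]
  norm_num [mul_comm]

lemma sq_rpow_sub_rpow_le_add {a b : ℝ} (ha : 0 ≤ a) (hb : 0 ≤ b) (p : ℝ) :
    (a ^ p - b ^ p) ^ 2 ≤ a ^ (2 * p) + b ^ (2 * p) := by
  rw [← rpow_sq_eq_rpow_two_mul ha, ← rpow_sq_eq_rpow_two_mul hb]
  nlinarith [mul_nonneg (rpow_nonneg ha p) (rpow_nonneg hb p)]

lemma abs_rpow_sub_rpow_le {p : ℝ} (hp : p ≤ 1) {a b : ℝ} (ha : 0 < a) (hab : a ≤ b) :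
    |b ^ p - a ^ p| ≤ |p| * a ^ (p - 1) * (b - a) := by
  have hderiv : ∀ x ∈ Ici a, HasDerivWithinAt (· ^ p) (p * x ^ (p - 1)) (Ici a) x :=
    fun x hx => (hasDerivAt_rpow_const (Or.inl (ha.trans_le hx).ne')).hasDerivWithinAt
  have hbound : ∀ x ∈ Ici a, ‖p * x ^ (p - 1)‖ ≤ |p| * a ^ (p - 1) := fun x hx => by
    rw [norm_mul, norm_eq_abs, norm_of_nonneg (rpow_nonneg (ha.le.trans hx) _)]
    exact mul_le_mul_of_nonneg_left (rpow_le_rpow_of_nonpos ha hx (by linarith)) (abs_nonneg p)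
  simpa [norm_eq_abs, abs_of_nonneg (sub_nonneg.2 hab)] using
    (convex_Ici a).norm_image_sub_le_of_norm_hasDerivWithin_le hderiv hbound self_mem_Ici hab

lemma sq_rpow_sub_rpow_le {p : ℝ} (hp : p ≤ 1) {a b : ℝ} (ha : 0 < a) (hab : a ≤ b) :
    (b ^ p - a ^ p) ^ 2 ≤ p ^ 2 * a ^ (2 * p - 2) * (b - a) ^ 2 := by
  have h := pow_le_pow_left₀ (abs_nonneg _) (abs_rpow_sub_rpow_le hp ha hab) 2
  rwa [sq_abs, mul_pow, mul_pow, sq_abs, rpow_sq_eq_rpow_two_mul ha.le, mul_sub, mul_one] at h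

lemma mul_rpow_le_rpow_add {h x p q : ℝ} (hh : 0 < h) (hx : h ≤ x) (hp : p ≤ 0) :
    h ^ q * x ^ p ≤ h ^ (q + p) := by
  rw [rpow_add hh]
  exact mul_le_mul_of_nonneg_left (rpow_le_rpow_of_nonpos hh hx hp) (rpow_nonneg hh.le q)

lemma inv_mul_rpow_neg_le {k x γ : ℝ} (hk : 1 ≤ k) (hx : 0 < x) (hγ : γ ≤ 1) :
    k⁻¹ * x ^ (-γ) ≤ (k * x) ^ (-γ) := by
  rw [mul_rpow (by linarith) hx.le, ← rpow_neg_one]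
  exact mul_le_mul_of_nonneg_right (rpow_le_rpow_of_exponent_le hk (by linarith))
    (rpow_nonneg hx.le _)

lemma rpow_neg_le_two_mul {γ s u : ℝ} (hγ0 : 0 ≤ γ) (hγ1 : γ ≤ 1) (hs : 0 < s)
    (hu : s / 2 ≤ u) :
    u ^ (-γ) ≤ 2 * s ^ (-γ) := by
  have h := inv_mul_rpow_neg_le one_le_two (half_pos hs) hγ1
  rw [mul_div_cancel₀ s two_ne_zero] at h
  calc u ^ (-γ) ≤ (s / 2) ^ (-γ) := rpow_le_rpow_of_nonpos (half_pos hs) hu (by linarith)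
    _ ≤ 2 * s ^ (-γ) := by linarith

lemma intervalIntegrable_sub_rpow {a b c r : ℝ} (h : -1 < r ∨ (0 : ℝ) ∉ [[c - b, c - a]]) :
    IntervalIntegrable (fun u => (c - u) ^ r) volume a b := by
  have hr : IntervalIntegrable (· ^ r) volume (c - b) (c - a) := by
    rcases h with h | h
    · exact intervalIntegrable_rpow' h
    · exact intervalIntegrable_rpow (Or.inr h)
  simpa only [sub_sub_cancel] using (hr.comp_sub_left c).symm

lemma integral_sub_rpow {a b c r : ℝ}
    (h : -1 < r ∨ r ≠ -1 ∧ (0 : ℝ) ∉ [[c - b, c - a]]) :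
    ∫ u in a..b, (c - u) ^ r = ((c - a) ^ (r + 1) - (c - b) ^ (r + 1)) / (r + 1) := by
  rw [integral_comp_sub_left (· ^ r), integral_rpow h]

lemma integral_right_sub_rpow {a b r : ℝ} (hr : -1 < r) :
    ∫ u in a..b, (b - u) ^ r = (b - a) ^ (r + 1) / (r + 1) := by
  rw [integral_sub_rpow (Or.inl hr), sub_self, zero_rpow (by linarith), sub_zero]

lemma IntervalIntegrable.mono_of_nonneg_of_le_Ioo {f g : ℝ → ℝ} {a b : ℝ}
    (hg : IntervalIntegrable g volume a b) (hab : a ≤ b) (hf : Measurable f)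
    (hf0 : ∀ x ∈ Ioo a b, 0 ≤ f x) (hfg : ∀ x ∈ Ioo a b, f x ≤ g x) :
    IntervalIntegrable f volume a b := by
  rw [intervalIntegrable_iff_integrableOn_Ioo_of_le hab] at hg ⊢
  refine hg.mono' hf.aestronglyMeasurable ((ae_restrict_iff' measurableSet_Ioo).2 ?_)
  exact ae_of_all _ fun x hx => (norm_of_nonneg (hf0 x hx)).trans_le (hfg x hx)

section Phi

variable {α γ s t : ℝ}

lemma Phi_eq_intervalIntegral (hs : 0 ≤ s) (hst : s ≤ t) :
    Phi α γ s t = (∫ u in 0..s, ((t - u) ^ α - (s - u) ^ α) ^ 2 * u ^ (-γ)) +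
      ∫ u in s..t, (t - u) ^ (2 * α) * u ^ (-γ) := by
  simp only [Phi, integral_of_le hs, integral_of_le hst, integral_Ioc_eq_integral_Ioo]

lemma intervalIntegrable_sub_rpow_mul_rpow_neg (hα : -(1 / 2) < α) (hγ : 0 ≤ γ) (hs : 0 < s)
    (hst : s ≤ t) : IntervalIntegrable (fun u => (t - u) ^ (2 * α) * u ^ (-γ)) volume s t := by
  have hg := (intervalIntegrable_sub_rpow (a := s) (b := t) (c := t) (r := 2 * α)
    (Or.inl (by linarith))).mul_const (s ^ (-γ))
  refine hg.mono_of_nonneg_of_le_Ioo hst (by fun_prop) (fun u hu => ?_) (fun u hu => ?_)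
  · exact mul_nonneg (rpow_nonneg (sub_pos.2 hu.2).le _) (rpow_nonneg (hs.trans hu.1).le _)
  · exact mul_le_mul_of_nonneg_left (rpow_le_rpow_of_nonpos hs hu.1.le (by linarith))
      (rpow_nonneg (sub_pos.2 hu.2).le _)

lemma le_integral_sub_rpow_mul_rpow_neg (hα : -(1 / 2) < α) (hγ : 0 ≤ γ) (hs : 0 < s)
    (hst : s ≤ t) :
    t ^ (-γ) * ((t - s) ^ (2 * α + 1) / (2 * α + 1)) ≤
      ∫ u in s..t, (t - u) ^ (2 * α) * u ^ (-γ) := by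
  rw [← integral_right_sub_rpow (by linarith), ← intervalIntegral.integral_const_mul]
  have hg := intervalIntegrable_sub_rpow (a := s) (b := t) (c := t) (r := 2 * α)
    (Or.inl (by linarith))
  refine integral_mono_on_of_le_Ioo hst (hg.const_mul _)
    (intervalIntegrable_sub_rpow_mul_rpow_neg hα hγ hs hst) fun u hu => ?_
  rw [mul_comm]
  exact mul_le_mul_of_nonneg_left (rpow_le_rpow_of_nonpos (hs.trans hu.1) hu.2.le (by linarith))
      (rpow_nonneg (sub_pos.2 hu.2).le _)

lemma integral_sub_rpow_mul_rpow_neg_le (hα : -(1 / 2) < α) (hγ : 0 ≤ γ) (hs : 0 < s)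
    (hst : s ≤ t) :
    ∫ u in s..t, (t - u) ^ (2 * α) * u ^ (-γ) ≤
      s ^ (-γ) * ((t - s) ^ (2 * α + 1) / (2 * α + 1)) := by
  rw [← integral_right_sub_rpow (by linarith), ← intervalIntegral.integral_const_mul]
  have hg := intervalIntegrable_sub_rpow (a := s) (b := t) (c := t) (r := 2 * α)
    (Or.inl (by linarith))
  refine integral_mono_on_of_le_Ioo hst (intervalIntegrable_sub_rpow_mul_rpow_neg hα hγ hs hst)
    (hg.const_mul _) fun u hu => ?_
  rw [mul_comm]
  exact mul_le_mul_of_nonneg_right (rpow_le_rpow_of_nonpos hs hu.1.le (by linarith))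
      (rpow_nonneg (sub_pos.2 hu.2).le _)

lemma intervalIntegrable_and_integral_Phi_left_le (hα : α < 1 / 2) (hγ0 : 0 ≤ γ)
    (hγ1 : γ < 1) (hs : 0 < s) (hst : s < t) (hts : 2 * (t - s) ≤ s) :
    IntervalIntegrable (fun u => ((t - u) ^ α - (s - u) ^ α) ^ 2 * u ^ (-γ)) volume 0 (s / 2) ∧
      ∫ u in 0..s / 2, ((t - u) ^ α - (s - u) ^ α) ^ 2 * u ^ (-γ) ≤
        2 * α ^ 2 / (1 - γ) * (t - s) ^ (2 * α + 1) * s ^ (-γ) := by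
  have hbound : ∀ u ∈ Ioo 0 (s / 2), ((t - u) ^ α - (s - u) ^ α) ^ 2 * u ^ (-γ) ≤
      α ^ 2 * (s / 2) ^ (2 * α - 2) * (t - s) ^ 2 * u ^ (-γ) := by
    rintro u ⟨hu0, hu⟩
    have h := sq_rpow_sub_rpow_le (p := α) (by linarith) (a := s - u) (b := t - u)
      (by linarith) (by linarith)
    rw [sub_sub_sub_cancel_right] at h
    refine mul_le_mul_of_nonneg_right (h.trans ?_) (rpow_nonneg hu0.le _)
    have hsu : (s - u) ^ (2 * α - 2) ≤ (s / 2) ^ (2 * α - 2) :=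
      rpow_le_rpow_of_nonpos (half_pos hs) (by linarith) (by linarith)
    gcongr
  have hg : IntervalIntegrable (fun u => α ^ 2 * (s / 2) ^ (2 * α - 2) * (t - s) ^ 2 * u ^ (-γ))
      volume 0 (s / 2) := (intervalIntegrable_rpow' (by linarith)).const_mul _
  have hF := hg.mono_of_nonneg_of_le_Ioo (by positivity) (by fun_prop)
    (fun u hu => mul_nonneg (sq_nonneg _) (rpow_nonneg (by linarith [hu.1]) _)) hbound
  refine ⟨hF, (integral_mono_on_of_le_Ioo (by positivity) hF hg hbound).trans ?_⟩
  have hpow : (t - s) ^ 2 * ((s / 2) ^ (2 * α - 2) * (s / 2) ^ (1 - γ)) ≤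
      (t - s) ^ (2 * α + 1) * (2 * s ^ (-γ)) := by
    rw [← rpow_add (half_pos hs), ← rpow_two,
      show 2 * α - 2 + (1 - γ) = 2 * α - 1 + -γ by ring, rpow_add (half_pos hs), ← mul_assoc,
      show 2 * α + 1 = 2 + (2 * α - 1) by ring]
    exact mul_le_mul (mul_rpow_le_rpow_add (by linarith) (by linarith) (by linarith))
      (rpow_neg_le_two_mul hγ0 hγ1.le hs le_rfl) (by positivity) (by positivity)
  have h1γ : 0 < 1 - γ := by linarith
  rw [intervalIntegral.integral_const_mul, integral_rpow (Or.inl (by linarith)),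
    zero_rpow (by linarith), sub_zero, neg_add_eq_sub]
  calc α ^ 2 * (s / 2) ^ (2 * α - 2) * (t - s) ^ 2 * ((s / 2) ^ (1 - γ) / (1 - γ))
      = α ^ 2 / (1 - γ) * ((t - s) ^ 2 * ((s / 2) ^ (2 * α - 2) * (s / 2) ^ (1 - γ))) := by ring
    _ ≤ α ^ 2 / (1 - γ) * ((t - s) ^ (2 * α + 1) * (2 * s ^ (-γ))) := by gcongr
    _ = 2 * α ^ 2 / (1 - γ) * (t - s) ^ (2 * α + 1) * s ^ (-γ) := by ring

lemma intervalIntegrable_and_integral_Phi_middle_le (hα : α < 1 / 2) (hγ0 : 0 ≤ γ)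
    (hγ1 : γ ≤ 1) (hs : 0 < s) (hst : s < t) (hts : 2 * (t - s) ≤ s) :
    IntervalIntegrable (fun u => ((t - u) ^ α - (s - u) ^ α) ^ 2 * u ^ (-γ)) volume
        (s / 2) (s - (t - s)) ∧
      ∫ u in s / 2..s - (t - s), ((t - u) ^ α - (s - u) ^ α) ^ 2 * u ^ (-γ) ≤
        2 * α ^ 2 / (1 - 2 * α) * (t - s) ^ (2 * α + 1) * s ^ (-γ) := by
  have hbound : ∀ u ∈ Ioo (s / 2) (s - (t - s)),
      ((t - u) ^ α - (s - u) ^ α) ^ 2 * u ^ (-γ) ≤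
        2 * α ^ 2 * (t - s) ^ 2 * s ^ (-γ) * (s - u) ^ (2 * α - 2) := by
    rintro u ⟨hu, hu'⟩
    have h := sq_rpow_sub_rpow_le (p := α) (by linarith) (a := s - u) (b := t - u)
      (by linarith) (by linarith)
    rw [sub_sub_sub_cancel_right] at h
    have hu0 : 0 < u := (half_pos hs).trans hu
    have hsu : 0 < s - u := by linarith
    exact (mul_le_mul h (rpow_neg_le_two_mul hγ0 hγ1 hs hu.le) (by positivity)
      (by positivity)).trans_eq (by ring)
  have h0 : (0 : ℝ) ∉ [[s - (s - (t - s)), s - s / 2]] := by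
    rw [uIcc_of_le (by linarith)]
    exact fun h => by linarith [h.1]
  have hg := (intervalIntegrable_sub_rpow (a := s / 2) (b := s - (t - s)) (c := s)
    (r := 2 * α - 2) (Or.inr h0)).const_mul (2 * α ^ 2 * (t - s) ^ 2 * s ^ (-γ))
  have hF := hg.mono_of_nonneg_of_le_Ioo (by linarith) (by fun_prop)
    (fun u hu => mul_nonneg (sq_nonneg _) (rpow_nonneg (by linarith [hu.1]) _)) hbound
  refine ⟨hF, (integral_mono_on_of_le_Ioo (by linarith) hF hg hbound).trans ?_⟩
  have hr : 2 * α - 2 ≠ -1 := by intro h; linarith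
  rw [intervalIntegral.integral_const_mul, integral_sub_rpow (Or.inr ⟨hr, h0⟩), sub_half,
    sub_sub_cancel, show 2 * α - 2 + 1 = 2 * α - 1 by ring, ← neg_div_neg_eq, neg_sub, neg_sub]
  have h12α : 0 < 1 - 2 * α := by linarith
  have hh : 0 < t - s := sub_pos.2 hst
  have hpow : (t - s) ^ 2 * (t - s) ^ (2 * α - 1) = (t - s) ^ (2 * α + 1) := by
    rw [← rpow_two, ← rpow_add hh]
    ring_nf
  calc 2 * α ^ 2 * (t - s) ^ 2 * s ^ (-γ) *
        (((t - s) ^ (2 * α - 1) - (s / 2) ^ (2 * α - 1)) / (1 - 2 * α))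
      ≤ 2 * α ^ 2 * (t - s) ^ 2 * s ^ (-γ) * ((t - s) ^ (2 * α - 1) / (1 - 2 * α)) := by
        gcongr
        exact sub_le_self _ (by positivity)
    _ = 2 * α ^ 2 / (1 - 2 * α) * (t - s) ^ (2 * α + 1) * s ^ (-γ) := by
        rw [← hpow]
        ring

lemma intervalIntegrable_and_integral_Phi_right_le (hα : -(1 / 2) < α) (hγ0 : 0 ≤ γ)
    (hγ1 : γ ≤ 1) (hs : 0 < s) (hst : s ≤ t) (hts : 2 * (t - s) ≤ s) :
    IntervalIntegrable (fun u => ((t - u) ^ α - (s - u) ^ α) ^ 2 * u ^ (-γ)) volume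
        (s - (t - s)) s ∧
      ∫ u in s - (t - s)..s, ((t - u) ^ α - (s - u) ^ α) ^ 2 * u ^ (-γ) ≤
        2 * 2 ^ (2 * α + 1) / (2 * α + 1) * (t - s) ^ (2 * α + 1) * s ^ (-γ) := by
  have hbound : ∀ u ∈ Ioo (s - (t - s)) s, ((t - u) ^ α - (s - u) ^ α) ^ 2 * u ^ (-γ) ≤
      2 * s ^ (-γ) * ((t - u) ^ (2 * α) + (s - u) ^ (2 * α)) := by
    rintro u ⟨hu, hu'⟩
    rw [mul_comm]
    exact mul_le_mul (rpow_neg_le_two_mul hγ0 hγ1 hs (by linarith))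
      (sq_rpow_sub_rpow_le_add (by linarith) (by linarith) α) (sq_nonneg _) (by positivity)
  have hit := intervalIntegrable_sub_rpow (a := s - (t - s)) (b := s) (c := t) (r := 2 * α)
    (Or.inl (by linarith))
  have his := intervalIntegrable_sub_rpow (a := s - (t - s)) (b := s) (c := s) (r := 2 * α)
    (Or.inl (by linarith))
  have hg := (hit.add his).const_mul (2 * s ^ (-γ))
  have hF := hg.mono_of_nonneg_of_le_Ioo (by linarith) (by fun_prop)
    (fun u hu => mul_nonneg (sq_nonneg _) (rpow_nonneg (by linarith [hu.1]) _)) hbound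
  refine ⟨hF, (integral_mono_on_of_le_Ioo (by linarith) hF hg hbound).trans ?_⟩
  rw [intervalIntegral.integral_const_mul, integral_add hit his,
    integral_sub_rpow (Or.inl (by linarith)), integral_right_sub_rpow (by linarith), sub_sub_cancel,
    show t - (s - (t - s)) = 2 * (t - s) by ring, mul_rpow zero_le_two (by linarith)]
  exact le_of_eq (by ring)

lemma le_Phi (hα : -(1 / 2) < α) (hγ0 : 0 ≤ γ) (hγ1 : γ ≤ 1) (hs : 0 < s) (hst : s ≤ t)
    (hts : 2 * (t - s) ≤ s) :
    2 / 3 / (2 * α + 1) * (t - s) ^ (2 * α + 1) / s ^ γ ≤ Phi α γ s t := by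
  have hst' : (3 / 2)⁻¹ * s ^ (-γ) ≤ t ^ (-γ) :=
    (inv_mul_rpow_neg_le (by norm_num) hs hγ1).trans
      (rpow_le_rpow_of_nonpos (by linarith) (by linarith) (by linarith))
  have hhead : 0 ≤ ∫ u in 0..s, ((t - u) ^ α - (s - u) ^ α) ^ 2 * u ^ (-γ) :=
    integral_nonneg hs.le fun u hu => mul_nonneg (sq_nonneg _) (rpow_nonneg hu.1 _)
  have hp : 0 < 2 * α + 1 := by linarith
  calc 2 / 3 / (2 * α + 1) * (t - s) ^ (2 * α + 1) / s ^ γ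
      = (3 / 2)⁻¹ * s ^ (-γ) * ((t - s) ^ (2 * α + 1) / (2 * α + 1)) := by
        rw [rpow_neg hs.le]
        ring
    _ ≤ t ^ (-γ) * ((t - s) ^ (2 * α + 1) / (2 * α + 1)) := by
        gcongr
    _ ≤ ∫ u in s..t, (t - u) ^ (2 * α) * u ^ (-γ) :=
        le_integral_sub_rpow_mul_rpow_neg hα hγ0 hs hst
    _ ≤ Phi α γ s t := by
        rw [Phi_eq_intervalIntegral hs.le hst]
        linarith

lemma Phi_le (hα1 : -(1 / 2) < α) (hα2 : α < 1 / 2) (hγ0 : 0 ≤ γ) (hγ1 : γ < 1)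
    (hs : 0 < s) (hst : s < t) (hts : 2 * (t - s) ≤ s) :
    Phi α γ s t ≤ (2 * α ^ 2 / (1 - γ) + 2 * α ^ 2 / (1 - 2 * α) +
      (2 * 2 ^ (2 * α + 1) + 1) / (2 * α + 1)) * (t - s) ^ (2 * α + 1) / s ^ γ := by
  obtain ⟨hi₁, hI₁⟩ := intervalIntegrable_and_integral_Phi_left_le hα2 hγ0 hγ1 hs hst hts
  obtain ⟨hi₂, hI₂⟩ :=
    intervalIntegrable_and_integral_Phi_middle_le hα2 hγ0 hγ1.le hs hst hts
  obtain ⟨hi₃, hI₃⟩ :=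
    intervalIntegrable_and_integral_Phi_right_le hα1 hγ0 hγ1.le hs hst.le hts
  have hJ := integral_sub_rpow_mul_rpow_neg_le hα1 hγ0 hs hst.le
  rw [Phi_eq_intervalIntegral hs.le hst.le,
    ← integral_add_adjacent_intervals (hi₁.trans hi₂) hi₃,
    ← integral_add_adjacent_intervals hi₁ hi₂, div_eq_mul_inv _ (s ^ γ), ← rpow_neg hs.le]
  linarith [show s ^ (-γ) * ((t - s) ^ (2 * α + 1) / (2 * α + 1)) +
    2 * 2 ^ (2 * α + 1) / (2 * α + 1) * (t - s) ^ (2 * α + 1) * s ^ (-γ) =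
    (2 * 2 ^ (2 * α + 1) + 1) / (2 * α + 1) * (t - s) ^ (2 * α + 1) * s ^ (-γ) by ring]

end Phi

/-- For `α ∈ (-1/2,1/2)`: `Φ(s,t) ≍ (t-s)^{2α+1}/s^γ` when `s > 2(t-s)`. -/
theorem Z_increment_bound_away (α γ : ℝ)
    (hα1 : -(1/2) < α) (hα2 : α < 1/2) (hγ0 : 0 ≤ γ) (hγ1 : γ < 1) :
    ∃ c C : ℝ, 0 < c ∧ c ≤ C ∧
      ∀ s t : ℝ, 0 < s → s < t → 2*(t-s) < s →
        c * (t-s) ^ (2*α+1) / s ^ γ ≤ Phi α γ s t ∧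
        Phi α γ s t ≤ C * (t-s) ^ (2*α+1) / s ^ γ := by
  have hp : 0 < 2 * α + 1 := by linarith
  refine ⟨2 / 3 / (2 * α + 1), 2 * α ^ 2 / (1 - γ) + 2 * α ^ 2 / (1 - 2 * α) +
    (2 * 2 ^ (2 * α + 1) + 1) / (2 * α + 1), by positivity, ?_, fun s t hs hst hts =>
    ⟨le_Phi hα1 hγ0 hγ1.le hs hst.le hts.le, Phi_le hα1 hα2 hγ0 hγ1 hs hst hts.le⟩⟩
  have h1γ : 0 < 1 - γ := by linarith
  have h12α : 0 < 1 - 2 * α := by linarith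
  have hc : 2 / 3 / (2 * α + 1) ≤ (2 * 2 ^ (2 * α + 1) + 1) / (2 * α + 1) := by
    gcongr
    linarith [rpow_pos_of_pos two_pos (2 * α + 1)]
  have : 0 ≤ 2 * α ^ 2 / (1 - γ) + 2 * α ^ 2 / (1 - 2 * α) := by positivity
  linarith
end

section
/- Let α = 1/2 and γ ∈ [0,1). There exist constants 0 < c ≤ C < ∞, depending only on γ, such that for all 0 < s < t < ∞ with s > 2(t−s) one has c · (t−s)² (1 + ln(s/(t−s))) / s^γ ≤ Φ(s,t) ≤ C · (t−s)² (1 + ln(s/(t−s))) / s^γ. -/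
open MeasureTheory

/-!
For `α = 1/2` the first integrand of `Φ` is `(√(t-u) - √(s-u))² u^{-γ}`. Since
`√b - √a = (b - a)/(√b + √a)` and `√b ≤ √b + √a ≤ 2√b`, it is comparable to `(t-s)² u^{-γ}/(t-u)`,
and `∫₀^s du/(t-u) = log (t/(t-s))` carries the logarithm. From below, `u^{-γ} ≥ s^{-γ}` on `(0,s)`.
From above, split at `s/2`: on `(s/2, s)` the weight is at most `(s/2)^{-γ} ≤ 2 s^{-γ}`, and on
`(0, s/2)` the factor `1/(t-u) ≤ 2/s` leaves `(2/s) ∫₀^s u^{-γ} = 2 s^{-γ}/(1-γ)`. The second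
integral of `Φ` lies between `t^{-γ}(t-s)²/2` and `s^{-γ}(t-s)²/2`, and `t^{-γ} ≥ s^{-γ}/2` once
`t ≤ 2s`.
-/

open Real Set

namespace Real

lemma sq_sqrt_sub_sqrt_le {a b : ℝ} (ha : 0 ≤ a) (hab : a ≤ b) :
    (√b - √a) ^ 2 ≤ (b - a) ^ 2 / b := by
  rcases (ha.trans hab).eq_or_lt with hb | hb
  · obtain rfl : a = 0 := by linarith
    simp [← hb]
  have hfac : b - a = (√b - √a) * (√b + √a) := by
    linear_combination sq_sqrt ha - sq_sqrt hb.le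
  rw [le_div_iff₀ hb, hfac, mul_pow]
  have : b ≤ (√b + √a) ^ 2 := by nlinarith [sq_sqrt hb.le, sqrt_nonneg a, sqrt_nonneg b]
  exact mul_le_mul_of_nonneg_left this (sq_nonneg _)

lemma sq_sub_div_four_mul_le_sq_sqrt_sub_sqrt {a b : ℝ} (ha : 0 ≤ a) (hab : a ≤ b) :
    (b - a) ^ 2 / (4 * b) ≤ (√b - √a) ^ 2 := by
  have hb := ha.trans hab
  have hfac : b - a = (√b - √a) * (√b + √a) := by
    linear_combination sq_sqrt ha - sq_sqrt hb
  refine div_le_of_le_mul₀ (by positivity) (sq_nonneg _) ?_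
  rw [hfac, mul_pow]
  have : (√b + √a) ^ 2 ≤ 4 * b := by
    nlinarith [sq_sqrt hb, sqrt_nonneg a, sqrt_le_sqrt hab]
  exact mul_le_mul_of_nonneg_left this (sq_nonneg _)

lemma half_rpow_neg_le_rpow_neg {γ s t : ℝ} (hγ0 : 0 ≤ γ) (hγ1 : γ ≤ 1) (ht : 0 < t)
    (hts : t ≤ 2 * s) : s ^ (-γ) / 2 ≤ t ^ (-γ) := by
  have hs : 0 < s := by linarith
  have h2 : (1 / 2 : ℝ) ≤ 2 ^ (-γ) := by
    simpa [rpow_neg_one] using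
      rpow_le_rpow_of_exponent_le (by norm_num : (1 : ℝ) ≤ 2) (neg_le_neg hγ1)
  calc s ^ (-γ) / 2 ≤ 2 ^ (-γ) * s ^ (-γ) := by nlinarith [rpow_pos_of_pos hs (-γ)]
    _ = (2 * s) ^ (-γ) := (mul_rpow zero_le_two hs.le).symm
    _ ≤ t ^ (-γ) := rpow_le_rpow_of_nonpos ht hts (neg_nonpos.2 hγ0)

lemma rpow_neg_mul_inv_sub_le {γ s t u : ℝ} (hγ : 0 ≤ γ) (hu : u ∈ Ioo 0 s) (hst : s ≤ t) :
    u ^ (-γ) * (t - u)⁻¹ ≤ 2 / s * u ^ (-γ) + (s / 2) ^ (-γ) * (t - u)⁻¹ := by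
  obtain ⟨hu0, hus⟩ := hu
  have hu' : 0 ≤ u ^ (-γ) := rpow_nonneg hu0.le _
  have htu : 0 ≤ (t - u)⁻¹ := inv_nonneg.2 (by linarith)
  rcases le_or_gt u (s / 2) with hu2 | hu2
  · have : (t - u)⁻¹ ≤ 2 / s := by
      rw [← inv_div]
      exact inv_anti₀ (by linarith) (by linarith)
    nlinarith [mul_le_mul_of_nonneg_left this hu', rpow_nonneg (half_pos (hu0.trans hus)).le (-γ)]
  · have : u ^ (-γ) ≤ (s / 2) ^ (-γ) := rpow_le_rpow_of_nonpos (by linarith) hu2.le (by linarith)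
    nlinarith [mul_le_mul_of_nonneg_right this htu,
      mul_nonneg (div_nonneg zero_le_two (hu0.trans hus).le) hu']

end Real

lemma integral_Ioo_sub_left {s t : ℝ} (hst : s ≤ t) :
    ∫ u in Ioo s t, (t - u) = (t - s) ^ 2 / 2 := by
  rw [← integral_Ioc_eq_integral_Ioo, ← intervalIntegral.integral_of_le hst,
    intervalIntegral.integral_comp_sub_left (fun x => x) t]
  simp [integral_id]

lemma integral_Ioo_rpow_neg {γ s : ℝ} (hγ : γ < 1) (hs : 0 ≤ s) :
    ∫ u in Ioo 0 s, u ^ (-γ) = s ^ (1 - γ) / (1 - γ) := by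
  rw [← integral_Ioc_eq_integral_Ioo, ← intervalIntegral.integral_of_le hs,
    integral_rpow (Or.inl (by linarith)), zero_rpow (by linarith)]
  ring_nf

lemma integral_Ioo_inv_sub {a b t : ℝ} (hab : a ≤ b) (hbt : b < t) :
    ∫ u in Ioo a b, (t - u)⁻¹ = log ((t - a) / (t - b)) := by
  rw [← integral_Ioc_eq_integral_Ioo, ← intervalIntegral.integral_of_le hab,
    intervalIntegral.integral_comp_sub_left (fun x => x⁻¹) t,
    integral_inv_of_pos (by linarith) (by linarith)]

lemma integrableOn_Ioo_inv_sub {a b t : ℝ} (hbt : b < t) :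
    IntegrableOn (fun u => (t - u)⁻¹) (Ioo a b) := by
  refine (ContinuousOn.integrableOn_Icc ?_).mono_set Ioo_subset_Icc_self
  exact (continuousOn_const.sub continuousOn_id).inv₀ fun u hu =>
    (sub_pos.2 (hu.2.trans_lt hbt)).ne'

lemma integrableOn_Ioo_rpow_neg_add_inv_sub {γ s t : ℝ} (hγ : γ < 1) (hs : 0 < s) (hst : s < t)
    (p q : ℝ) : IntegrableOn (fun u => p * u ^ (-γ) + q * (t - u)⁻¹) (Ioo 0 s) :=
  (((intervalIntegral.integrableOn_Ioo_rpow_iff hs).2 (by linarith)).const_mul p).add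
    ((integrableOn_Ioo_inv_sub hst).const_mul q)

lemma integral_Ioo_rpow_neg_add_inv_sub {γ s t : ℝ} (hγ : γ < 1) (hs : 0 < s) (hst : s < t)
    (p q : ℝ) :
    ∫ u in Ioo 0 s, (p * u ^ (-γ) + q * (t - u)⁻¹) =
      p * (s ^ (1 - γ) / (1 - γ)) + q * log (t / (t - s)) := by
  rw [integral_add (((intervalIntegral.integrableOn_Ioo_rpow_iff hs).2 (by linarith)).const_mul p)
      ((integrableOn_Ioo_inv_sub hst).const_mul q),
    integral_const_mul, integral_const_mul, integral_Ioo_rpow_neg hγ hs.le,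
    integral_Ioo_inv_sub hs.le hst, sub_zero]

lemma sq_sqrt_sub_sqrt_mul_rpow_le {γ s t u : ℝ} (hγ : 0 ≤ γ) (hu : u ∈ Ioo 0 s) (hst : s ≤ t) :
    (√(t - u) - √(s - u)) ^ 2 * u ^ (-γ) ≤
      (t - s) ^ 2 * (2 / s * u ^ (-γ) + (s / 2) ^ (-γ) * (t - u)⁻¹) := by
  have hsq := sq_sqrt_sub_sqrt_le (sub_nonneg.2 hu.2.le) (sub_le_sub_right hst u)
  rw [sub_sub_sub_cancel_right, div_eq_mul_inv] at hsq
  calc _ ≤ (t - s) ^ 2 * (t - u)⁻¹ * u ^ (-γ) :=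
        mul_le_mul_of_nonneg_right hsq (rpow_nonneg hu.1.le _)
    _ = (t - s) ^ 2 * (u ^ (-γ) * (t - u)⁻¹) := by ring
    _ ≤ _ := mul_le_mul_of_nonneg_left (rpow_neg_mul_inv_sub_le hγ hu hst) (sq_nonneg _)

lemma integrableOn_sq_sqrt_sub_sqrt_mul_rpow {γ s t : ℝ} (hγ0 : 0 ≤ γ) (hγ1 : γ < 1) (hs : 0 < s)
    (hst : s < t) :
    IntegrableOn (fun u => (√(t - u) - √(s - u)) ^ 2 * u ^ (-γ)) (Ioo 0 s) := by
  refine ((integrableOn_Ioo_rpow_neg_add_inv_sub hγ1 hs hst (2 / s) ((s / 2) ^ (-γ))).const_mul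
    ((t - s) ^ 2)).mono' (by fun_prop) (ae_restrict_of_forall_mem measurableSet_Ioo fun u hu => ?_)
  rw [norm_of_nonneg (mul_nonneg (sq_nonneg _) (rpow_nonneg hu.1.le _))]
  exact sq_sqrt_sub_sqrt_mul_rpow_le hγ0 hu hst.le

lemma integral_sq_sqrt_sub_sqrt_mul_rpow_le {γ s t : ℝ} (hγ0 : 0 ≤ γ) (hγ1 : γ < 1) (hs : 0 < s)
    (hst : s < t) :
    ∫ u in Ioo 0 s, (√(t - u) - √(s - u)) ^ 2 * u ^ (-γ) ≤
      (t - s) ^ 2 * (2 * s ^ (-γ) / (1 - γ) + (s / 2) ^ (-γ) * log (t / (t - s))) := by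
  have hpow : s ^ (1 - γ) = s * s ^ (-γ) := by rw [sub_eq_add_neg, rpow_add hs, rpow_one]
  calc _ ≤ ∫ u in Ioo 0 s, (t - s) ^ 2 * (2 / s * u ^ (-γ) + (s / 2) ^ (-γ) * (t - u)⁻¹) :=
        setIntegral_mono_on (integrableOn_sq_sqrt_sub_sqrt_mul_rpow hγ0 hγ1 hs hst)
          ((integrableOn_Ioo_rpow_neg_add_inv_sub hγ1 hs hst _ _).const_mul _) measurableSet_Ioo
          fun u hu => sq_sqrt_sub_sqrt_mul_rpow_le hγ0 hu hst.le
    _ = _ := by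
      rw [integral_const_mul, integral_Ioo_rpow_neg_add_inv_sub hγ1 hs hst, hpow]
      field_simp

lemma le_integral_sq_sqrt_sub_sqrt_mul_rpow {γ s t : ℝ} (hγ0 : 0 ≤ γ) (hγ1 : γ < 1) (hs : 0 < s)
    (hst : s < t) :
    (t - s) ^ 2 * s ^ (-γ) / 4 * log (t / (t - s)) ≤
      ∫ u in Ioo 0 s, (√(t - u) - √(s - u)) ^ 2 * u ^ (-γ) := by
  have hlog := integral_Ioo_inv_sub hs.le hst
  rw [sub_zero] at hlog
  rw [← hlog, ← integral_const_mul]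
  refine setIntegral_mono_on ((integrableOn_Ioo_inv_sub hst).const_mul _)
    (integrableOn_sq_sqrt_sub_sqrt_mul_rpow hγ0 hγ1 hs hst) measurableSet_Ioo fun u hu => ?_
  have hsq := sq_sub_div_four_mul_le_sq_sqrt_sub_sqrt (sub_nonneg.2 hu.2.le)
    (sub_le_sub_right hst.le u)
  rw [sub_sub_sub_cancel_right] at hsq
  calc (t - s) ^ 2 * s ^ (-γ) / 4 * (t - u)⁻¹ = (t - s) ^ 2 / (4 * (t - u)) * s ^ (-γ) := by
        rw [div_eq_mul_inv _ (4 * _), mul_inv]; ring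
    _ ≤ _ := mul_le_mul hsq (rpow_le_rpow_of_nonpos hu.1 hu.2.le (by linarith))
      (rpow_nonneg hs.le _) (sq_nonneg _)

lemma integrableOn_Ioo_sub_mul_rpow {r s t : ℝ} (hs : 0 < s) :
    IntegrableOn (fun u => (t - u) * u ^ r) (Ioo s t) := by
  refine (ContinuousOn.integrableOn_Icc ?_).mono_set Ioo_subset_Icc_self
  exact (continuousOn_const.sub continuousOn_id).mul
    (continuousOn_id.rpow_const fun u hu => Or.inl (hs.trans_le hu.1).ne')

lemma integrableOn_Ioo_const_mul_sub {s t : ℝ} (c : ℝ) :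
    IntegrableOn (fun u => c * (t - u)) (Ioo s t) :=
  (Continuous.integrableOn_Icc (by fun_prop)).mono_set Ioo_subset_Icc_self

lemma integral_Ioo_sub_mul_rpow_neg_le {γ s t : ℝ} (hγ : 0 ≤ γ) (hs : 0 < s) (hst : s ≤ t) :
    ∫ u in Ioo s t, (t - u) * u ^ (-γ) ≤ s ^ (-γ) * ((t - s) ^ 2 / 2) := by
  rw [← integral_Ioo_sub_left hst, ← integral_const_mul]
  refine setIntegral_mono_on (integrableOn_Ioo_sub_mul_rpow hs) (integrableOn_Ioo_const_mul_sub _)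
    measurableSet_Ioo fun u hu => ?_
  rw [mul_comm (t - u)]
  exact mul_le_mul_of_nonneg_right (rpow_le_rpow_of_nonpos hs hu.1.le (by linarith))
    (by linarith [hu.2])

lemma le_integral_Ioo_sub_mul_rpow_neg {γ s t : ℝ} (hγ : 0 ≤ γ) (hs : 0 < s) (hst : s ≤ t) :
    t ^ (-γ) * ((t - s) ^ 2 / 2) ≤ ∫ u in Ioo s t, (t - u) * u ^ (-γ) := by
  rw [← integral_Ioo_sub_left hst, ← integral_const_mul]
  refine setIntegral_mono_on (integrableOn_Ioo_const_mul_sub _) (integrableOn_Ioo_sub_mul_rpow hs)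
    measurableSet_Ioo fun u hu => ?_
  rw [mul_comm (t - u)]
  exact mul_le_mul_of_nonneg_right (rpow_le_rpow_of_nonpos (hs.trans hu.1) hu.2.le (by linarith))
    (by linarith [hu.2])

lemma Phi_one_half_eq (γ s t : ℝ) :
    Phi (1 / 2) γ s t = (∫ u in Ioo 0 s, (√(t - u) - √(s - u)) ^ 2 * u ^ (-γ)) +
      ∫ u in Ioo s t, (t - u) * u ^ (-γ) := by
  simp only [Phi, sqrt_eq_rpow]
  norm_num

lemma le_Phi_one_half {γ s t : ℝ} (hγ0 : 0 ≤ γ) (hγ1 : γ < 1) (hs : 0 < s) (hst : s < t)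
    (hts : t ≤ 2 * s) :
    1 / 4 * (t - s) ^ 2 * (1 + log (s / (t - s))) / s ^ γ ≤ Phi (1 / 2) γ s t := by
  have hd : 0 < t - s := sub_pos.2 hst
  have hlog : log (s / (t - s)) ≤ log (t / (t - s)) :=
    log_le_log (div_pos hs hd) (div_le_div_of_nonneg_right hst.le hd.le)
  have hm : s ^ (-γ) / 2 ≤ t ^ (-γ) := half_rpow_neg_le_rpow_neg hγ0 hγ1.le (hs.trans hst) hts
  rw [Phi_one_half_eq, div_eq_mul_inv, ← rpow_neg hs.le]
  calc 1 / 4 * (t - s) ^ 2 * (1 + log (s / (t - s))) * s ^ (-γ)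
      = (t - s) ^ 2 * s ^ (-γ) / 4 * log (s / (t - s)) + s ^ (-γ) / 2 * ((t - s) ^ 2 / 2) := by
        ring
    _ ≤ (t - s) ^ 2 * s ^ (-γ) / 4 * log (t / (t - s)) + t ^ (-γ) * ((t - s) ^ 2 / 2) := by
        gcongr
    _ ≤ _ := add_le_add (le_integral_sq_sqrt_sub_sqrt_mul_rpow hγ0 hγ1 hs hst)
        (le_integral_Ioo_sub_mul_rpow_neg hγ0 hs hst.le)

lemma Phi_one_half_le {γ s t : ℝ} (hγ0 : 0 ≤ γ) (hγ1 : γ < 1) (hst : s < t) (hts : t - s ≤ s) :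
    Phi (1 / 2) γ s t ≤ (2 / (1 - γ) + 3) * (t - s) ^ 2 * (1 + log (s / (t - s))) / s ^ γ := by
  have hd : 0 < t - s := sub_pos.2 hst
  have hs : 0 < s := hd.trans_le hts
  have hL : 0 ≤ log (s / (t - s)) := log_nonneg ((one_le_div hd).2 hts)
  have hlog0 : 0 ≤ log (t / (t - s)) := log_nonneg ((one_le_div hd).2 (by linarith))
  have hlog : log (t / (t - s)) ≤ log 2 + log (s / (t - s)) := by
    rw [← log_mul two_ne_zero (div_pos hs hd).ne', mul_div_assoc']
    exact log_le_log (div_pos (hs.trans hst) hd) (by gcongr; linarith)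
  have hm : (s / 2) ^ (-γ) ≤ 2 * s ^ (-γ) := by
    linarith [half_rpow_neg_le_rpow_neg hγ0 hγ1.le hs (by linarith : s ≤ 2 * (s / 2))]
  have hC : 2 / (1 - γ) + 2 * (log 2 + log (s / (t - s))) + 1 / 2 ≤
      (2 / (1 - γ) + 3) * (1 + log (s / (t - s))) := by
    have := mul_nonneg (div_nonneg zero_le_two (sub_nonneg.2 hγ1.le)) hL
    nlinarith [log_two_lt_d9]
  rw [Phi_one_half_eq, div_eq_mul_inv, ← rpow_neg hs.le]
  calc _ ≤ (t - s) ^ 2 * (2 * s ^ (-γ) / (1 - γ) + (s / 2) ^ (-γ) * log (t / (t - s))) +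
          s ^ (-γ) * ((t - s) ^ 2 / 2) :=
        add_le_add (integral_sq_sqrt_sub_sqrt_mul_rpow_le hγ0 hγ1 hs hst)
          (integral_Ioo_sub_mul_rpow_neg_le hγ0 hs hst.le)
    _ ≤ (t - s) ^ 2 * (2 * s ^ (-γ) / (1 - γ) + 2 * s ^ (-γ) * (log 2 + log (s / (t - s)))) +
          s ^ (-γ) * ((t - s) ^ 2 / 2) := by
        gcongr
    _ = (t - s) ^ 2 * s ^ (-γ) * (2 / (1 - γ) + 2 * (log 2 + log (s / (t - s))) + 1 / 2) := by
        ring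
    _ ≤ (t - s) ^ 2 * s ^ (-γ) * ((2 / (1 - γ) + 3) * (1 + log (s / (t - s)))) := by gcongr
    _ = _ := by ring

/-- For `α = 1/2`: `Φ(s,t) ≍ (t-s)² (1 + ln(s/(t-s)))/s^γ` when `s > 2(t-s)`. -/
theorem Z_increment_bound_away_critical (γ : ℝ) (hγ0 : 0 ≤ γ) (hγ1 : γ < 1) :
    ∃ c C : ℝ, 0 < c ∧ c ≤ C ∧
      ∀ s t : ℝ, 0 < s → s < t → 2*(t-s) < s →
        c * (t-s)^2 * (1 + Real.log (s/(t-s))) / s ^ γ ≤ Phi (1/2) γ s t ∧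
        Phi (1/2) γ s t ≤ C * (t-s)^2 * (1 + Real.log (s/(t-s))) / s ^ γ := by
  have hC : 0 ≤ 2 / (1 - γ) := div_nonneg zero_le_two (sub_nonneg.2 hγ1.le)
  refine ⟨1 / 4, 2 / (1 - γ) + 3, by norm_num, by linarith, fun s t hs hst hcl => ⟨?_, ?_⟩⟩
  · exact le_Phi_one_half hγ0 hγ1 hs hst (by linarith)
  · exact Phi_one_half_le hγ0 hγ1 hst (by linarith)
end

section
/- Let α ∈ (−1/2, 1/2) and γ ∈ [0,1), and fix t ∈ (0,∞). Then lim_{s → t, s ≠ t, s > 0} Φ(min(s,t), max(s,t)) / |t−s|^{2α+1} = c · t^{−γ}, where c = 1/(2α+1) + ∫₀^∞ ((1+v)^α − v^α)² dv (a finite constant). -/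
open MeasureTheory

/-!
Write `h = b - a` for `0 < a < b` and split `∫₀^a` at `a / 2`. The substitutions `u = a - h v`
on `(a/2, a)` and `u = b - h w` on `(a, b)` pull out the factor `h^{2α+1}` and leave
`∫₀^{a/(2h)} ((1+v)^α - v^α)² (a - h v)^{-γ} dv` and `∫₀^1 w^{2α} (b - h w)^{-γ} dw`, which
converge by dominated convergence because the weights are evaluated at points above `a / 2`.
On `(0, a/2)` the mean value theorem bounds the integrand by `O(h²) u^{-γ}`, and `h² = o(h^{2α+1})`
since `α < 1/2`; the same bound `((1+v)^α - v^α)² = O(v^{2α-2})` makes the kernel integrable at `∞`.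
-/

open Filter Set Topology

lemma Real.rpow_two_mul_eq_sq {x : ℝ} (hx : 0 ≤ x) (p : ℝ) : x ^ (2 * p) = (x ^ p) ^ 2 := by
  rw [← Real.rpow_mul_natCast hx]
  ring_nf

lemma abs_rpow_sub_rpow_le_s6 {p c x y : ℝ} (hp : p ≤ 1) (hc : 0 < c) (hcx : c ≤ x) (hxy : x ≤ y) :
    |y ^ p - x ^ p| ≤ |p| * c ^ (p - 1) * (y - x) := by
  have hderiv : ∀ z ∈ Ici c, HasDerivWithinAt (fun z : ℝ => z ^ p) (p * z ^ (p - 1)) (Ici c) z :=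
    fun z hz => (Real.hasDerivAt_rpow_const (Or.inl (hc.trans_le hz).ne')).hasDerivWithinAt
  have hbound : ∀ z ∈ Ici c, ‖p * z ^ (p - 1)‖ ≤ |p| * c ^ (p - 1) := fun z hz => by
    rw [Real.norm_eq_abs, abs_mul, abs_of_nonneg (Real.rpow_nonneg (hc.le.trans hz) _)]
    exact mul_le_mul_of_nonneg_left (Real.rpow_le_rpow_of_nonpos hc hz (by linarith)) (abs_nonneg p)
  simpa [Real.norm_eq_abs, abs_of_nonneg (sub_nonneg.mpr hxy)] using
    (convex_Ici c).norm_image_sub_le_of_norm_hasDerivWithin_le hderiv hbound hcx (hcx.trans hxy)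

lemma sq_rpow_sub_rpow_le_s6 {p c x y : ℝ} (hp : p ≤ 1) (hc : 0 < c) (hcx : c ≤ x) (hxy : x ≤ y) :
    (y ^ p - x ^ p) ^ 2 ≤ p ^ 2 * c ^ (2 * p - 2) * (y - x) ^ 2 := by
  calc (y ^ p - x ^ p) ^ 2 = |y ^ p - x ^ p| ^ 2 := (sq_abs _).symm
    _ ≤ (|p| * c ^ (p - 1) * (y - x)) ^ 2 :=
      pow_le_pow_left₀ (abs_nonneg _) (abs_rpow_sub_rpow_le_s6 hp hc hcx hxy) 2
    _ = p ^ 2 * c ^ (2 * p - 2) * (y - x) ^ 2 := by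
      rw [mul_pow, mul_pow, sq_abs, ← Real.rpow_two_mul_eq_sq hc.le]
      ring_nf

lemma sq_rpow_sub_rpow_le_two_mul {p x y : ℝ} (hx : 0 ≤ x) (hy : 0 ≤ y) :
    (x ^ p - y ^ p) ^ 2 ≤ 2 * x ^ (2 * p) + 2 * y ^ (2 * p) := by
  rw [Real.rpow_two_mul_eq_sq hx, Real.rpow_two_mul_eq_sq hy]
  nlinarith [sq_nonneg (x ^ p + y ^ p)]

lemma integrableOn_sq_one_add_rpow_sub_rpow {α : ℝ} (hα1 : -(1/2) < α) (hα2 : α < 1/2) :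
    IntegrableOn (fun v : ℝ => ((1 + v) ^ α - v ^ α) ^ 2) (Ioi 0) := by
  have hmeas : AEStronglyMeasurable (fun v : ℝ => ((1 + v) ^ α - v ^ α) ^ 2) := by fun_prop
  rw [← Ioc_union_Ioi_eq_Ioi zero_le_one]
  refine IntegrableOn.union ?_ ?_
  · have hcont : ContinuousOn (fun v : ℝ => 2 * (1 + v) ^ (2 * α)) (Icc 0 1) :=
      fun v hv => by fun_prop (disch := exact Or.inl (by linarith [hv.1]))
    have hrpow : IntegrableOn (fun v : ℝ => v ^ (2 * α)) (Ioc 0 1) :=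
      (intervalIntegrable_iff_integrableOn_Ioc_of_le zero_le_one).mp
        (intervalIntegral.intervalIntegrable_rpow' (by linarith))
    refine ((hcont.integrableOn_Icc.mono_set Ioc_subset_Icc_self).add (hrpow.const_mul 2)).mono'
      hmeas.restrict (ae_restrict_of_forall_mem measurableSet_Ioc fun v hv => ?_)
    rw [Real.norm_of_nonneg (sq_nonneg _)]
    exact sq_rpow_sub_rpow_le_two_mul (by linarith [hv.1]) hv.1.le
  · have htail := integrableOn_Ioi_rpow_of_lt (by linarith : 2 * α - 2 < -1) one_pos
    refine (htail.const_mul (α ^ 2)).mono' hmeas.restrict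
      (ae_restrict_of_forall_mem measurableSet_Ioi fun v (hv : 1 < v) => ?_)
    rw [Real.norm_of_nonneg (sq_nonneg _)]
    simpa using sq_rpow_sub_rpow_le_s6 (by linarith) (by linarith) le_rfl (by linarith : v ≤ 1 + v)

section
variable {α γ a b : ℝ}

lemma integrableOn_Phi_integrand_Icc_zero_half (hγ1 : γ < 1) (ha : 0 < a) (hab : a < b) :
    IntegrableOn (fun u => ((b - u) ^ α - (a - u) ^ α) ^ 2 * u ^ (-γ)) (Icc 0 (a / 2)) := by
  have hcont : ContinuousOn (fun u : ℝ => ((b - u) ^ α - (a - u) ^ α) ^ 2) (Icc 0 (a / 2)) :=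
    fun u hu => by fun_prop (disch := exact Or.inl (by linarith [hu.2]))
  have hrpow : IntegrableOn (fun u : ℝ => u ^ (-γ)) (Icc 0 (a / 2)) :=
    (intervalIntegrable_iff_integrableOn_Icc_of_le (by linarith)).mp
      (intervalIntegral.intervalIntegrable_rpow' (by linarith))
  exact hrpow.continuousOn_mul hcont isCompact_Icc

lemma integrableOn_Phi_integrand_Icc_half_self (hα1 : -(1/2) < α) (ha : 0 < a) (hab : a < b) :
    IntegrableOn (fun u => ((b - u) ^ α - (a - u) ^ α) ^ 2 * u ^ (-γ)) (Icc (a / 2) a) := by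
  have hb : ContinuousOn (fun u : ℝ => 2 * (b - u) ^ (2 * α)) (Icc (a / 2) a) :=
    fun u hu => by fun_prop (disch := exact Or.inl (by linarith [hu.2]))
  have hsing : IntegrableOn (fun u : ℝ => (a - u) ^ (2 * α)) (Icc (a / 2) a) := by
    have := (intervalIntegral.intervalIntegrable_rpow' (a := a / 2) (b := 0)
      (by linarith : -1 < 2 * α)).comp_sub_left a
    rw [sub_zero, sub_half] at this
    exact (intervalIntegrable_iff_integrableOn_Icc_of_le (by linarith)).mp this
  have hγ : ContinuousOn (fun u : ℝ => u ^ (-γ)) (Icc (a / 2) a) :=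
    fun u hu => by fun_prop (disch := exact Or.inl (by linarith [hu.1]))
  refine ((hb.integrableOn_Icc.add (hsing.const_mul 2)).mul_continuousOn hγ isCompact_Icc).mono'
    (by fun_prop) (ae_restrict_of_forall_mem measurableSet_Icc fun u hu => ?_)
  have hu0 : 0 ≤ u ^ (-γ) := Real.rpow_nonneg (by linarith [hu.1]) _
  rw [Real.norm_of_nonneg (by positivity)]
  exact mul_le_mul_of_nonneg_right
    (sq_rpow_sub_rpow_le_two_mul (by linarith [hu.2]) (by linarith [hu.2])) hu0

lemma integral_Phi_integrand_half_self (ha : 0 < a) (hab : a < b) :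
    ∫ u in (a / 2)..a, ((b - u) ^ α - (a - u) ^ α) ^ 2 * u ^ (-γ) =
      (b - a) ^ (2 * α + 1) * ∫ v in Ioc 0 (a / (2 * (b - a))),
        ((1 + v) ^ α - v ^ α) ^ 2 * (a - (b - a) * v) ^ (-γ) := by
  have hh : 0 < b - a := by linarith
  have hsubst := intervalIntegral.smul_integral_comp_sub_mul (a := 0) (b := a / (2 * (b - a)))
    (fun u => ((b - u) ^ α - (a - u) ^ α) ^ 2 * u ^ (-γ)) (b - a) a
  rw [mul_zero, sub_zero, show (b - a) * (a / (2 * (b - a))) = a / 2 by field_simp, sub_half]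
    at hsubst
  rw [← hsubst, smul_eq_mul, intervalIntegral.integral_of_le (by positivity),
    ← integral_const_mul, ← integral_const_mul, Real.rpow_add hh, Real.rpow_one]
  refine setIntegral_congr_fun measurableSet_Ioc fun v hv => ?_
  have hscale : ((b - (a - (b - a) * v)) ^ α - (a - (a - (b - a) * v)) ^ α) ^ 2 =
      (b - a) ^ (2 * α) * ((1 + v) ^ α - v ^ α) ^ 2 := by
    rw [show b - (a - (b - a) * v) = (b - a) * (1 + v) by ring,
      show a - (a - (b - a) * v) = (b - a) * v by ring,
      Real.mul_rpow hh.le (by linarith [hv.1]), Real.mul_rpow hh.le hv.1.le,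
      Real.rpow_two_mul_eq_sq hh.le]
    ring
  simp only [hscale]
  ring

lemma integral_Ioo_sub_rpow_mul_rpow (hab : a < b) :
    ∫ u in Ioo a b, (b - u) ^ (2 * α) * u ^ (-γ) =
      (b - a) ^ (2 * α + 1) * ∫ w in Ioc 0 1, w ^ (2 * α) * (b - (b - a) * w) ^ (-γ) := by
  have hh : 0 < b - a := by linarith
  have hsubst := intervalIntegral.smul_integral_comp_sub_mul (a := 0) (b := 1)
    (fun u => (b - u) ^ (2 * α) * u ^ (-γ)) (b - a) b
  rw [mul_zero, sub_zero, mul_one, sub_sub_cancel, intervalIntegral.integral_of_le hab.le,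
    integral_Ioc_eq_integral_Ioo] at hsubst
  rw [← hsubst, smul_eq_mul, intervalIntegral.integral_of_le zero_le_one,
    ← integral_const_mul, ← integral_const_mul, Real.rpow_add hh, Real.rpow_one]
  refine setIntegral_congr_fun measurableSet_Ioc fun w hw => ?_
  simp only [sub_sub_cancel, Real.mul_rpow hh.le hw.1.le]
  ring

lemma Phi_eq (hα1 : -(1/2) < α) (hγ1 : γ < 1) (ha : 0 < a) (hab : a < b) :
    Phi α γ a b = (∫ u in 0..(a / 2), ((b - u) ^ α - (a - u) ^ α) ^ 2 * u ^ (-γ)) +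
      (b - a) ^ (2 * α + 1) * ((∫ v in Ioc 0 (a / (2 * (b - a))),
          ((1 + v) ^ α - v ^ α) ^ 2 * (a - (b - a) * v) ^ (-γ)) +
        ∫ w in Ioc 0 1, w ^ (2 * α) * (b - (b - a) * w) ^ (-γ)) := by
  have hsplit := intervalIntegral.integral_add_adjacent_intervals
    ((intervalIntegrable_iff_integrableOn_Icc_of_le (by linarith)).mpr
      (integrableOn_Phi_integrand_Icc_zero_half (α := α) hγ1 ha hab))
    ((intervalIntegrable_iff_integrableOn_Icc_of_le (by linarith)).mpr
      (integrableOn_Phi_integrand_Icc_half_self (γ := γ) hα1 ha hab))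
  rw [intervalIntegral.integral_of_le ha.le, integral_Ioc_eq_integral_Ioo] at hsplit
  rw [Phi, ← hsplit, integral_Phi_integrand_half_self ha hab, integral_Ioo_sub_rpow_mul_rpow hab]
  ring

lemma integral_Phi_integrand_zero_half_le (hα : α ≤ 1) (hγ1 : γ < 1) (ha : 0 < a) (hab : a < b) :
    ∫ u in 0..(a / 2), ((b - u) ^ α - (a - u) ^ α) ^ 2 * u ^ (-γ) ≤
      α ^ 2 / (1 - γ) * (a / 2) ^ (2 * α - 1 - γ) * (b - a) ^ 2 := by
  set C := α ^ 2 * (a / 2) ^ (2 * α - 2) * (b - a) ^ 2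
  have hmono : ∫ u in 0..(a / 2), ((b - u) ^ α - (a - u) ^ α) ^ 2 * u ^ (-γ) ≤
      ∫ u in 0..(a / 2), C * u ^ (-γ) := by
    refine intervalIntegral.integral_mono_on (by linarith)
      ((intervalIntegrable_iff_integrableOn_Icc_of_le (by linarith)).mpr
        (integrableOn_Phi_integrand_Icc_zero_half hγ1 ha hab))
      ((intervalIntegral.intervalIntegrable_rpow' (by linarith)).const_mul C) fun u hu => ?_
    refine mul_le_mul_of_nonneg_right ?_ (Real.rpow_nonneg hu.1 _)
    simpa using sq_rpow_sub_rpow_le_s6 hα (by linarith : 0 < a / 2) (by linarith [hu.2])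
      (by linarith : a - u ≤ b - u)
  rw [intervalIntegral.integral_const_mul, integral_rpow (Or.inl (by linarith)),
    Real.zero_rpow (by linarith), sub_zero] at hmono
  calc _ ≤ _ := hmono
    _ = α ^ 2 / (1 - γ) * ((a / 2) ^ (2 * α - 2) * (a / 2) ^ (-γ + 1)) * (b - a) ^ 2 := by ring
    _ = _ := by rw [← Real.rpow_add (by linarith)]; ring_nf
end

lemma tendsto_setIntegral_mul_rpow_neg {ι : Type*} {l : Filter ι} [l.IsCountablyGenerated]
    {s : Set ℝ} {S : ι → Set ℝ} {g : ℝ → ℝ} {x : ι → ℝ → ℝ} {m t γ : ℝ}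
    (hs : MeasurableSet s) (hS : ∀ i, MeasurableSet (S i)) (hSs : ∀ i, S i ⊆ s)
    (hg : IntegrableOn g s) (hx : ∀ i, Measurable (x i)) (hm : 0 < m) (ht : 0 < t) (hγ : 0 ≤ γ)
    (hxm : ∀ᶠ i in l, ∀ w ∈ S i, m ≤ x i w) (hSl : ∀ w ∈ s, ∀ᶠ i in l, w ∈ S i)
    (hxt : ∀ w ∈ s, Tendsto (fun i => x i w) l (𝓝 t)) :
    Tendsto (fun i => ∫ w in S i, g w * x i w ^ (-γ)) l (𝓝 ((∫ w in s, g w) * t ^ (-γ))) := by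
  have hind : ∀ i, ∫ w in S i, g w * x i w ^ (-γ) =
      ∫ w in s, (S i).indicator (fun w => g w * x i w ^ (-γ)) w := fun i => by
    rw [integral_indicator (hS i), Measure.restrict_restrict (hS i), inter_eq_left.mpr (hSs i)]
  simp_rw [hind, ← integral_mul_const]
  refine tendsto_integral_filter_of_dominated_convergence (fun w => |g w| * m ^ (-γ))
    (Eventually.of_forall fun i => ?_) ?_ (hg.abs.mul_const _)
    (ae_restrict_of_forall_mem hs fun w hw => ?_)
  · exact (hg.aestronglyMeasurable.mul ((hx i).pow_const _).aestronglyMeasurable).indicator (hS i)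
  · filter_upwards [hxm] with i hi
    refine ae_of_all _ fun w => ?_
    by_cases hw : w ∈ S i
    · have hxw := hi w hw
      rw [indicator_of_mem hw, norm_mul, Real.norm_eq_abs,
        Real.norm_of_nonneg (Real.rpow_nonneg (hm.le.trans hxw) _)]
      exact mul_le_mul_of_nonneg_left (Real.rpow_le_rpow_of_nonpos hm hxw (by linarith))
        (abs_nonneg _)
    · rw [indicator_of_notMem hw, norm_zero]
      positivity
  · refine Tendsto.congr' ?_ (((hxt w hw).rpow_const (Or.inl ht.ne')).const_mul (g w))
    filter_upwards [hSl w hw] with i hi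
    rw [indicator_of_mem hi]

lemma tendsto_integral_Phi_integrand_zero_half_div {ι : Type*} {l : Filter ι} {a b : ι → ℝ}
    {α γ t : ℝ} (hα2 : α < 1/2) (hγ1 : γ < 1) (ht : 0 < t) (ha : Tendsto a l (𝓝 t))
    (hb : Tendsto b l (𝓝 t)) (hab : ∀ᶠ i in l, a i < b i) :
    Tendsto (fun i => (∫ u in 0..(a i / 2), ((b i - u) ^ α - (a i - u) ^ α) ^ 2 * u ^ (-γ)) /
      (b i - a i) ^ (2 * α + 1)) l (𝓝 0) := by
  set K := fun x : ℝ => α ^ 2 / (1 - γ) * (x / 2) ^ (2 * α - 1 - γ)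
  have hK : Tendsto (fun i => K (a i)) l (𝓝 (K t)) :=
    ((ha.div_const 2).rpow_const (Or.inl (by positivity))).const_mul _
  have hpow : Tendsto (fun i => (b i - a i) ^ (1 - 2 * α)) l (𝓝 0) := by
    simpa [Real.zero_rpow (by linarith : 1 - 2 * α ≠ 0)] using
      (hb.sub ha).rpow_const (Or.inr (by linarith : (0:ℝ) ≤ 1 - 2 * α))
  have hpos : ∀ᶠ i in l, 0 < a i := ha.eventually_const_lt ht
  refine squeeze_zero' ?_ ?_ (by simpa using hK.mul hpow)
  · filter_upwards [hab, hpos] with i hi hi0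
    refine div_nonneg (intervalIntegral.integral_nonneg (by linarith) fun u hu => ?_)
      (by positivity)
    exact mul_nonneg (sq_nonneg _) (Real.rpow_nonneg hu.1 _)
  · filter_upwards [hab, hpos] with i hi hi0
    have hh0 : 0 < b i - a i := by linarith
    rw [div_le_iff₀ (by positivity), mul_assoc, ← Real.rpow_add hh0,
      show 1 - 2 * α + (2 * α + 1) = ((2 : ℕ) : ℝ) by push_cast; ring, Real.rpow_natCast]
    exact integral_Phi_integrand_zero_half_le (by linarith) hγ1 hi0 hi

lemma tendsto_integral_kernel_mul_rpow_neg {ι : Type*} {l : Filter ι} [l.IsCountablyGenerated]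
    {a b : ι → ℝ} {α γ t : ℝ} (hα1 : -(1/2) < α) (hα2 : α < 1/2) (hγ0 : 0 ≤ γ) (ht : 0 < t)
    (ha : Tendsto a l (𝓝 t)) (hb : Tendsto b l (𝓝 t)) (hab : ∀ᶠ i in l, a i < b i) :
    Tendsto (fun i => ∫ v in Ioc 0 (a i / (2 * (b i - a i))),
      ((1 + v) ^ α - v ^ α) ^ 2 * (a i - (b i - a i) * v) ^ (-γ)) l
      (𝓝 ((∫ v in Ioi (0:ℝ), ((1 + v) ^ α - v ^ α) ^ 2) * t ^ (-γ))) := by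
  have hh : Tendsto (fun i => b i - a i) l (𝓝 0) := by simpa using hb.sub ha
  refine tendsto_setIntegral_mul_rpow_neg measurableSet_Ioi (fun _ => measurableSet_Ioc)
    (fun _ => Ioc_subset_Ioi_self) (integrableOn_sq_one_add_rpow_sub_rpow hα1 hα2)
    (fun _ => by fun_prop) (by linarith : 0 < t / 4) ht hγ0 ?_ (fun v hv => ?_)
    (fun v _ => by simpa using ha.sub (hh.mul_const v))
  · filter_upwards [hab, ha.eventually_const_lt (by linarith : t / 2 < t)] with i hi hi2 v hv
    have := (le_div_iff₀ (by linarith)).mp hv.2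
    linarith
  · have h0 : Tendsto (fun i => 2 * ((b i - a i) * v)) l (𝓝 0) := by
      simpa using (hh.mul_const v).const_mul 2
    filter_upwards [hab, h0.eventually_lt ha ht] with i hi hi2
    exact ⟨hv, (le_div_iff₀ (by linarith)).mpr (by linarith)⟩

theorem tendsto_Phi_div_rpow_sub {ι : Type*} {l : Filter ι} [l.IsCountablyGenerated]
    {a b : ι → ℝ} {α γ t : ℝ} (hα1 : -(1/2) < α) (hα2 : α < 1/2) (hγ0 : 0 ≤ γ) (hγ1 : γ < 1)
    (ht : 0 < t) (ha : Tendsto a l (𝓝 t)) (hb : Tendsto b l (𝓝 t)) (hab : ∀ᶠ i in l, a i < b i) :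
    Tendsto (fun i => Phi α γ (a i) (b i) / (b i - a i) ^ (2 * α + 1)) l
      (𝓝 ((1 / (2 * α + 1) + ∫ v in Ioi (0:ℝ), ((1 + v) ^ α - v ^ α) ^ 2) * t ^ (-γ))) := by
  have ha2 : ∀ᶠ i in l, t / 2 < a i := ha.eventually_const_lt (by linarith)
  have hpower : Tendsto (fun i => ∫ w in Ioc 0 1, w ^ (2 * α) * (b i - (b i - a i) * w) ^ (-γ))
      l (𝓝 ((∫ w in Ioc (0:ℝ) 1, w ^ (2 * α)) * t ^ (-γ))) := by
    refine tendsto_setIntegral_mul_rpow_neg measurableSet_Ioc (fun _ => measurableSet_Ioc)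
      (fun _ => subset_rfl) ?_ (fun _ => by fun_prop) (by linarith : 0 < t / 2) ht hγ0 ?_
      (fun _ hw => Eventually.of_forall fun _ => hw)
      (fun w _ => by simpa using hb.sub ((hb.sub ha).mul_const w))
    · exact (intervalIntegrable_iff_integrableOn_Ioc_of_le zero_le_one).mp
        (intervalIntegral.intervalIntegrable_rpow' (by linarith))
    · filter_upwards [hab, ha2] with i hi hi2 w hw
      nlinarith [hw.2]
  have hI : ∫ w in Ioc (0:ℝ) 1, w ^ (2 * α) = 1 / (2 * α + 1) := by
    rw [← intervalIntegral.integral_of_le zero_le_one, integral_rpow (Or.inl (by linarith)),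
      Real.one_rpow, Real.zero_rpow (by linarith)]
    ring
  rw [hI] at hpower
  convert ((tendsto_integral_Phi_integrand_zero_half_div hα2 hγ1 ht ha hb hab).add
    ((tendsto_integral_kernel_mul_rpow_neg hα1 hα2 hγ0 ht ha hb hab).add hpower)).congr' ?_ using 2
  · ring
  filter_upwards [hab, ha2] with i hi hi2
  rw [Phi_eq hα1 hγ1 (by linarith) hi, add_div, mul_div_cancel_left₀ _ (by positivity)]

/-- Exact asymptotics: `E[(Z(t)-Z(s))²]/|t-s|^{2α+1} → c t^{-γ}` as `s → t`. -/
theorem Z_increment_exact_asymptotics (α γ : ℝ)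
    (hα1 : -(1/2) < α) (hα2 : α < 1/2) (hγ0 : 0 ≤ γ) (hγ1 : γ < 1)
    (t : ℝ) (ht : 0 < t) :
    IntegrableOn (fun v : ℝ => ((1+v) ^ α - v ^ α)^2) (Set.Ioi 0) ∧
    Filter.Tendsto
      (fun s : ℝ => Phi α γ (min s t) (max s t) / |t - s| ^ (2*α+1))
      (nhdsWithin t (Set.Ioi 0 \ {t}))
      (nhds ((1/(2*α+1) + ∫ v in Set.Ioi (0:ℝ), ((1+v) ^ α - v ^ α)^2) * t ^ (-γ))) := by
  refine ⟨integrableOn_sq_one_add_rpow_sub_rpow hα1 hα2, ?_⟩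
  have hmin : Tendsto (fun s => min s t) (𝓝[Ioi 0 \ {t}] t) (𝓝 t) :=
    ((continuous_id.min continuous_const).tendsto' t t (min_self t)).mono_left nhdsWithin_le_nhds
  have hmax : Tendsto (fun s => max s t) (𝓝[Ioi 0 \ {t}] t) (𝓝 t) :=
    ((continuous_id.max continuous_const).tendsto' t t (max_self t)).mono_left nhdsWithin_le_nhds
  have hlt : ∀ᶠ s in 𝓝[Ioi 0 \ {t}] t, min s t < max s t :=
    eventually_mem_nhdsWithin.mono fun s hs => min_lt_max.mpr hs.2
  simpa only [max_sub_min_eq_abs] using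
    tendsto_Phi_div_rpow_sub hα1 hα2 hγ0 hγ1 ht hmin hmax hlt
end

section
/- Let γ ∈ (0,1) and α ∈ (−1/2 + γ/2, 1/2 + γ/2), and set H = α − γ/2 + 1/2. Then for all 0 < s ≤ t < ∞ one has (st)^{2H} ∫_ℝ ((1/s − u)₊^α − (−u)₊^α)((1/t − u)₊^α − (−u)₊^α) |u|^{−γ} du = ∫_ℝ ((t − v)₊^α − (−v)₊^α)((s − v)₊^α − (−v)₊^α) |v|^{−γ} dv, both integrals being absolutely convergent. Here x₊ = max(x,0) and x₊^α is interpreted as 0 when x₊ = 0. -/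
open MeasureTheory

namespace GFBMAux

open Set

lemma plusPow_of_pos {x : ℝ} (hx : 0 < x) (a : ℝ) : plusPow x a = x ^ a := if_pos hx

lemma plusPow_of_nonpos {x : ℝ} (hx : x ≤ 0) (a : ℝ) : plusPow x a = 0 :=
  if_neg (not_lt.mpr hx)

lemma measurable_plusPow (a : ℝ) : Measurable fun x : ℝ => plusPow x a := by
  unfold plusPow
  exact Measurable.ite (measurableSet_lt measurable_const measurable_id)
    (measurable_id.pow measurable_const) measurable_const

lemma plusPow_div {c : ℝ} (hc : 0 < c) (x a : ℝ) :
    plusPow (x / c) a = plusPow x a / c ^ a := by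
  unfold plusPow
  by_cases hx : 0 < x
  · rw [if_pos (div_pos hx hc), if_pos hx, Real.div_rpow hx.le hc.le]
  · rw [if_neg hx, if_neg, zero_div]
    intro h
    exact hx (by nlinarith [mul_pos h hc, div_mul_cancel₀ x hc.ne'])

lemma sq_rpow {x : ℝ} (hx : 0 ≤ x) (p : ℝ) : (x ^ p) ^ 2 = x ^ (2 * p) := by
  rw [← Real.rpow_natCast (x ^ p) 2, ← Real.rpow_mul hx]
  norm_num [mul_comm]

lemma abs_rpow_sub_le {a : ℝ} (ha : a < 1) {x r : ℝ} (hx : 0 < x) (hr : 0 < r) :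
    |(x + r) ^ a - x ^ a| ≤ |a| * r * x ^ (a - 1) := by
  obtain ⟨c, hc, hslope⟩ := exists_hasDerivAt_eq_slope (fun y => y ^ a)
    (fun y => a * y ^ (a - 1)) (by linarith : x < x + r)
    (continuousOn_id.rpow_const fun y hy => Or.inl (ne_of_gt (lt_of_lt_of_le hx hy.1)))
    (fun y hy => Real.hasDerivAt_rpow_const (Or.inl (ne_of_gt (hx.trans hy.1))))
  have hc0 : 0 < c := hx.trans hc.1
  have h2 : x + r - x = r := by ring
  rw [h2, eq_div_iff hr.ne'] at hslope
  rw [← hslope, abs_mul, abs_mul, abs_of_pos hr,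
    abs_of_nonneg (Real.rpow_nonneg hc0.le _)]
  have hle : c ^ (a - 1) ≤ x ^ (a - 1) :=
    Real.rpow_le_rpow_of_nonpos hx hc.1.le (by linarith)
  calc |a| * c ^ (a - 1) * r ≤ |a| * x ^ (a - 1) * r := by
        gcongr
      _ = |a| * r * x ^ (a - 1) := by ring

lemma ii_rpow {p : ℝ} (hp : -1 < p) (a b : ℝ) :
    IntervalIntegrable (fun x : ℝ => x ^ p) volume a b :=
  intervalIntegral.intervalIntegrable_rpow' hp

lemma ii_to_Ico {f : ℝ → ℝ} {a b : ℝ} (hab : a ≤ b) (h : IntervalIntegrable f volume a b) :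
    IntegrableOn f (Ico a b) := by
  rw [integrableOn_Ico_iff_integrableOn_Ioo, ← integrableOn_Ioc_iff_integrableOn_Ioo]
  exact (intervalIntegrable_iff_integrableOn_Ioc_of_le hab).1 h

lemma integrableOn_rpow_neg_Iio {p : ℝ} (hp : p < -1) :
    IntegrableOn (fun v : ℝ => (-v) ^ p) (Iio (-1)) := by
  have h : IntegrableOn (fun t : ℝ => t ^ p) (Ioi 1) :=
    integrableOn_Ioi_rpow_of_lt hp zero_lt_one
  have h2 := (MeasurePreserving.integrableOn_comp_preimage
    (Measure.measurePreserving_neg (volume : Measure ℝ))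
    (Homeomorph.neg ℝ).measurableEmbedding).2 h
  have hset : (Neg.neg ⁻¹' Ioi (1:ℝ)) = Iio (-1) := by
    ext x; simp [lt_neg]
  rw [hset] at h2
  exact h2

lemma mono_on {f g : ℝ → ℝ} {s : Set ℝ} (hs : MeasurableSet s) (hg : IntegrableOn g s)
    (hf : AEStronglyMeasurable f (volume.restrict s)) (h : ∀ x ∈ s, ‖f x‖ ≤ g x) :
    IntegrableOn f s :=
  Integrable.mono' hg hf ((ae_restrict_iff' hs).2 (Filter.Eventually.of_forall h))

lemma integrable_h {γ α : ℝ} (hγ0 : 0 < γ) (hγ1 : γ < 1)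
    (hα1 : -(1/2) + γ/2 < α) (hα2 : α < 1/2 + γ/2) {r : ℝ} (hr : 0 < r) :
    Integrable (fun v : ℝ => (plusPow (r - v) α - plusPow (-v) α) ^ 2 * |v| ^ (-γ)) := by
  have hα_lt1 : α < 1 := by linarith
  have hmeas : Measurable fun v : ℝ =>
      (plusPow (r - v) α - plusPow (-v) α) ^ 2 * |v| ^ (-γ) :=
    ((((measurable_plusPow α).comp (measurable_const.sub measurable_id)).sub
      ((measurable_plusPow α).comp measurable_neg)).pow_const 2).mul
      (measurable_abs.pow measurable_const)
  set h : ℝ → ℝ := fun v => (plusPow (r - v) α - plusPow (-v) α) ^ 2 * |v| ^ (-γ) with hh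
  have p1 : IntegrableOn h (Iio (-1)) := by
    apply mono_on measurableSet_Iio
      ((integrableOn_rpow_neg_Iio (by linarith : 2*α - 2 - γ < -1)).const_mul (α^2 * r^2))
      hmeas.aestronglyMeasurable.restrict
    intro v hv
    simp only [mem_Iio] at hv
    have hA : (0:ℝ) < -v := by linarith
    have hrv : 0 < r - v := by linarith
    have e1 : plusPow (r - v) α = (-v + r) ^ α := by
      rw [plusPow_of_pos hrv]; congr 1; ring
    have e2 : plusPow (-v) α = (-v) ^ α := plusPow_of_pos hA _
    have hb : |(-v + r) ^ α - (-v) ^ α| ≤ |α| * r * (-v) ^ (α - 1) :=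
      abs_rpow_sub_le hα_lt1 hA hr
    rw [Real.norm_eq_abs]
    simp only [hh]
    rw [abs_of_nonneg (by positivity), abs_of_neg (by linarith : v < 0), e1, e2]
    calc ((-v + r) ^ α - (-v) ^ α) ^ 2 * (-v) ^ (-γ)
        ≤ (|α| * r * (-v) ^ (α - 1)) ^ 2 * (-v) ^ (-γ) := by
          apply mul_le_mul_of_nonneg_right _ (Real.rpow_nonneg hA.le _)
          rw [← sq_abs]
          exact pow_le_pow_left₀ (abs_nonneg _) hb 2
      _ = α^2 * r^2 * (-v) ^ (2*α - 2 - γ) := by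
          rw [mul_pow, mul_pow, sq_abs, sq_rpow hA.le, mul_assoc,
            ← Real.rpow_add hA, show 2*(α-1) + -γ = 2*α - 2 - γ from by ring]
  have p2 : IntegrableOn h (Ico (-1) 0) := by
    set M := max (r ^ (2*α)) ((r+1) ^ (2*α)) with hM
    have i1 : IntegrableOn (fun v : ℝ => (-v) ^ (-γ)) (Ico (-1) 0) := by
      have hii := (ii_rpow (by linarith : (-1:ℝ) < -γ) 0 1).comp_sub_left 0
      simp only [zero_sub, sub_zero] at hii
      exact ii_to_Ico (by norm_num) hii.symm
    have i2 : IntegrableOn (fun v : ℝ => (-v) ^ (2*α - γ)) (Ico (-1) 0) := by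
      have hii := (ii_rpow (by linarith : (-1:ℝ) < 2*α - γ) 0 1).comp_sub_left 0
      simp only [zero_sub, sub_zero] at hii
      exact ii_to_Ico (by norm_num) hii.symm
    apply mono_on measurableSet_Ico
      ((i1.const_mul (2*M)).add (i2.const_mul 2)) hmeas.aestronglyMeasurable.restrict
    intro v hv
    obtain ⟨hv1, hv0⟩ := hv
    have hA : (0:ℝ) < -v := by linarith
    have hrv : 0 < r - v := by linarith
    have e1 : plusPow (r - v) α = (r - v) ^ α := plusPow_of_pos hrv _
    have e2 : plusPow (-v) α = (-v) ^ α := plusPow_of_pos hA _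
    have hMb : (r - v) ^ (2*α) ≤ M := by
      rcases le_or_gt 0 (2*α) with hcase | hcase
      · exact le_max_of_le_right (Real.rpow_le_rpow (by linarith) (by linarith) hcase)
      · exact le_max_of_le_left (Real.rpow_le_rpow_of_nonpos hr (by linarith) hcase.le)
    have hsq : ((r - v) ^ α - (-v) ^ α) ^ 2 ≤ 2 * (r-v)^(2*α) + 2 * (-v)^(2*α) := by
      have h1 : ((r - v) ^ α) ^ 2 = (r-v) ^ (2*α) := sq_rpow hrv.le α
      have h2 : ((-v) ^ α) ^ 2 = (-v) ^ (2*α) := sq_rpow hA.le α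
      nlinarith [sq_nonneg ((r-v)^α + (-v)^α)]
    have hw : (0:ℝ) ≤ (-v) ^ (-γ) := Real.rpow_nonneg hA.le _
    have hprod : (-v)^(2*α) * (-v)^(-γ) = (-v)^(2*α - γ) := by
      rw [← Real.rpow_add hA, show 2*α + -γ = 2*α - γ from by ring]
    rw [Real.norm_eq_abs]
    simp only [hh]
    rw [abs_of_nonneg (by positivity), abs_of_neg hv0, e1, e2]
    calc ((r - v) ^ α - (-v) ^ α) ^ 2 * (-v) ^ (-γ)
        ≤ (2 * M + 2 * (-v)^(2*α)) * (-v) ^ (-γ) := by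
          apply mul_le_mul_of_nonneg_right _ hw
          linarith
      _ = 2 * M * (-v) ^ (-γ) + 2 * (-v) ^ (2*α - γ) := by
          linear_combination 2 * hprod
  have p3 : IntegrableOn h (Ico 0 (r/2)) := by
    set M₁ := max (r ^ (2*α)) ((r/2) ^ (2*α)) with hM₁
    have i3 : IntegrableOn (fun v : ℝ => v ^ (-γ)) (Ico 0 (r/2)) :=
      ii_to_Ico (by linarith) (ii_rpow (by linarith) 0 (r/2))
    apply mono_on measurableSet_Ico (i3.const_mul M₁) hmeas.aestronglyMeasurable.restrict
    intro v hv
    obtain ⟨hv0, hvr⟩ := hv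
    have hrv : 0 < r - v := by linarith
    have e1 : plusPow (r - v) α = (r - v) ^ α := plusPow_of_pos hrv _
    have e2 : plusPow (-v) α = 0 := plusPow_of_nonpos (by linarith) _
    have hM1 : (r - v) ^ (2*α) ≤ M₁ := by
      rcases le_or_gt 0 (2*α) with hcase | hcase
      · exact le_max_of_le_left (Real.rpow_le_rpow (by linarith) (by linarith) hcase)
      · exact le_max_of_le_right (Real.rpow_le_rpow_of_nonpos (by linarith) (by linarith) hcase.le)
    rw [Real.norm_eq_abs]
    simp only [hh]
    rw [abs_of_nonneg (by positivity), abs_of_nonneg hv0, e1, e2, sub_zero, sq_rpow hrv.le]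
    exact mul_le_mul_of_nonneg_right hM1 (Real.rpow_nonneg hv0 _)
  have p4 : IntegrableOn h (Ico (r/2) r) := by
    have i4 : IntegrableOn (fun v : ℝ => (r - v) ^ (2*α)) (Ico (r/2) r) := by
      have hii := (ii_rpow (by linarith : (-1:ℝ) < 2*α) 0 (r/2)).comp_sub_left r
      simp only [sub_zero] at hii
      rw [show r - r/2 = r/2 from by ring] at hii
      exact ii_to_Ico (by linarith) hii.symm
    apply mono_on measurableSet_Ico (i4.const_mul ((r/2) ^ (-γ)))
      hmeas.aestronglyMeasurable.restrict
    intro v hv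
    obtain ⟨hv1, hv2⟩ := hv
    have hv0 : 0 < v := by linarith
    have hrv : 0 < r - v := by linarith
    have e1 : plusPow (r - v) α = (r - v) ^ α := plusPow_of_pos hrv _
    have e2 : plusPow (-v) α = 0 := plusPow_of_nonpos (by linarith) _
    have hvγ : v ^ (-γ) ≤ (r/2) ^ (-γ) :=
      Real.rpow_le_rpow_of_nonpos (by linarith) hv1 (by linarith)
    rw [Real.norm_eq_abs]
    simp only [hh]
    rw [abs_of_nonneg (by positivity), abs_of_pos hv0, e1, e2, sub_zero, sq_rpow hrv.le]
    calc (r-v)^(2*α) * v ^ (-γ) ≤ (r-v)^(2*α) * (r/2)^(-γ) :=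
          mul_le_mul_of_nonneg_left hvγ (Real.rpow_nonneg hrv.le _)
      _ = (r/2)^(-γ) * (r-v)^(2*α) := by ring
  have p5 : IntegrableOn h (Ici r) := by
    apply mono_on measurableSet_Ici integrableOn_zero
      hmeas.aestronglyMeasurable.restrict
    intro v hv
    have hv' : r ≤ v := hv
    rw [Real.norm_eq_abs]
    simp only [hh]
    rw [plusPow_of_nonpos (by linarith : r - v ≤ 0), plusPow_of_nonpos (by linarith : -v ≤ 0)]
    norm_num
  rw [← integrableOn_univ]
  apply IntegrableOn.mono_set ((((p1.union p2).union p3).union p4).union p5)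
  intro x _
  simp only [mem_union, mem_Iio, mem_Ico, mem_Ici]
  rcases lt_or_ge x (-1) with h1 | h1
  · exact Or.inl (Or.inl (Or.inl (Or.inl h1)))
  rcases lt_or_ge x 0 with h2 | h2
  · exact Or.inl (Or.inl (Or.inl (Or.inr ⟨h1, h2⟩)))
  rcases lt_or_ge x (r/2) with h3 | h3
  · exact Or.inl (Or.inl (Or.inr ⟨h2, h3⟩))
  rcases lt_or_ge x r with h4 | h4
  · exact Or.inl (Or.inr ⟨h3, h4⟩)
  · exact Or.inr h4

lemma measurable_integrand (a b γ α : ℝ) :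
    Measurable (fun v : ℝ => (plusPow (a - v) α - plusPow (-v) α) *
      (plusPow (b - v) α - plusPow (-v) α) * |v| ^ (-γ)) := by
  have m0 : Measurable fun v : ℝ => plusPow (-v) α :=
    (measurable_plusPow α).comp measurable_neg
  have m1 : Measurable fun v : ℝ => plusPow (a - v) α :=
    (measurable_plusPow α).comp (measurable_const.sub measurable_id)
  have m2 : Measurable fun v : ℝ => plusPow (b - v) α :=
    (measurable_plusPow α).comp (measurable_const.sub measurable_id)
  exact ((m1.sub m0).mul (m2.sub m0)).mul (measurable_abs.pow measurable_const)

lemma integrable_g {γ α : ℝ} (hγ0 : 0 < γ) (hγ1 : γ < 1)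
    (hα1 : -(1/2) + γ/2 < α) (hα2 : α < 1/2 + γ/2) {s t : ℝ} (hs : 0 < s) (ht : 0 < t) :
    Integrable (fun v : ℝ => (plusPow (t - v) α - plusPow (-v) α) *
      (plusPow (s - v) α - plusPow (-v) α) * |v| ^ (-γ)) := by
  have h1 := integrable_h hγ0 hγ1 hα1 hα2 ht
  have h2 := integrable_h hγ0 hγ1 hα1 hα2 hs
  refine (h1.add h2).mono' (measurable_integrand t s γ α).aestronglyMeasurable
    (Filter.Eventually.of_forall fun v => ?_)
  simp only [Pi.add_apply]
  set a := plusPow (t - v) α - plusPow (-v) α with ha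
  set b := plusPow (s - v) α - plusPow (-v) α with hb
  have habs : 0 ≤ |v| ^ (-γ) := Real.rpow_nonneg (abs_nonneg v) _
  have hab : |a * b| ≤ a ^ 2 + b ^ 2 := by
    nlinarith [sq_nonneg (|a| - |b|), sq_abs a, sq_abs b, abs_mul a b,
      abs_nonneg a, abs_nonneg b, abs_nonneg (a*b)]
  rw [Real.norm_eq_abs, abs_mul, abs_of_nonneg habs]
  have h3 := mul_le_mul_of_nonneg_right hab habs
  nlinarith [h3]

end GFBMAux

open GFBMAux Set

/-- Time-inversion property of the GFBM covariance:
`(st)^{2H} E[X(1/s)X(1/t)] = E[X(s)X(t)]`. -/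
theorem gfbm_time_inversion (γ α : ℝ) (hγ0 : 0 < γ) (hγ1 : γ < 1)
    (hα1 : -(1/2) + γ/2 < α) (hα2 : α < 1/2 + γ/2) :
    ∀ s t : ℝ, 0 < s → s ≤ t →
      Integrable (fun u : ℝ =>
        (plusPow (1/s - u) α - plusPow (-u) α) *
          (plusPow (1/t - u) α - plusPow (-u) α) * |u| ^ (-γ)) ∧
      Integrable (fun v : ℝ =>
        (plusPow (t - v) α - plusPow (-v) α) *
          (plusPow (s - v) α - plusPow (-v) α) * |v| ^ (-γ)) ∧
      (s*t) ^ (2*(α - γ/2 + 1/2)) *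
        ∫ u : ℝ, (plusPow (1/s - u) α - plusPow (-u) α) *
          (plusPow (1/t - u) α - plusPow (-u) α) * |u| ^ (-γ) =
      ∫ v : ℝ, (plusPow (t - v) α - plusPow (-v) α) *
          (plusPow (s - v) α - plusPow (-v) α) * |v| ^ (-γ) := by
  intro s t hs hst
  have ht : 0 < t := lt_of_lt_of_le hs hst
  have hg := integrable_g hγ0 hγ1 hα1 hα2 hs ht
  set c := s * t with hc_def
  have hc : 0 < c := mul_pos hs ht
  set k := c ^ (γ - 2*α) with hk
  have hk3 : k = (c ^ α)⁻¹ * (c ^ α)⁻¹ * (c ^ (-γ))⁻¹ := by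
    rw [hk, ← Real.rpow_neg hc.le, ← Real.rpow_neg hc.le,
      ← Real.rpow_add hc, ← Real.rpow_add hc]
    congr 1
    ring
  have key : ∀ u : ℝ, (plusPow (1/s - u) α - plusPow (-u) α) *
      (plusPow (1/t - u) α - plusPow (-u) α) * |u| ^ (-γ)
      = k * ((plusPow (t - c*u) α - plusPow (-(c*u)) α) *
      (plusPow (s - c*u) α - plusPow (-(c*u)) α) * |c*u| ^ (-γ)) := by
    intro u
    have e1 : 1/s - u = (t - c*u) / c := by
      rw [hc_def]; field_simp
    have e2 : 1/t - u = (s - c*u) / c := by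
      rw [hc_def]; field_simp
    have e3 : -u = (-(c*u)) / c := by field_simp
    have e4 : |u| = |c*u| / c := by
      rw [abs_mul, abs_of_pos hc]
      field_simp
    rw [e1, e2, e3, e4, plusPow_div hc, plusPow_div hc, plusPow_div hc,
      Real.div_rpow (abs_nonneg _) hc.le, hk3]
    ring
  have hL : Integrable (fun u : ℝ =>
      (plusPow (1/s - u) α - plusPow (-u) α) *
        (plusPow (1/t - u) α - plusPow (-u) α) * |u| ^ (-γ)) := by
    simp only [key]
    exact ((MeasureTheory.integrable_comp_mul_left_iff
      (fun v : ℝ => (plusPow (t - v) α - plusPow (-v) α) *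
        (plusPow (s - v) α - plusPow (-v) α) * |v| ^ (-γ)) hc.ne').2 hg).const_mul k
  refine ⟨hL, hg, ?_⟩
  have hcoef : (s*t) ^ (2*(α - γ/2 + 1/2)) * (k * |c⁻¹|) = 1 := by
    rw [abs_of_pos (inv_pos.2 hc), hk, ← hc_def, ← mul_assoc, ← Real.rpow_add hc,
      show 2*(α - γ/2 + 1/2) + (γ - 2*α) = 1 from by ring, Real.rpow_one,
      mul_inv_cancel₀ hc.ne']
  simp only [key]
  rw [MeasureTheory.integral_const_mul k _]
  rw [MeasureTheory.Measure.integral_comp_mul_left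
    (fun v : ℝ => (plusPow (t - v) α - plusPow (-v) α) *
      (plusPow (s - v) α - plusPow (-v) α) * |v| ^ (-γ)) c]
  rw [smul_eq_mul]
  set I := ∫ v : ℝ, (plusPow (t - v) α - plusPow (-v) α) *
      (plusPow (s - v) α - plusPow (-v) α) * |v| ^ (-γ) with hI
  linear_combination I * hcoef
end

section
/- Let γ ∈ [0,1) and α ∈ (−1/2, 1/2], and let η = 0 if α ∈ (−1/2, 1/2) and η = 1 if α = 1/2. Then there exist constants 0 < c ≤ C < ∞ such that for all x ≥ 2 one has c · x^{−γ} (1 + ln x)^η ≤ ∫₁^x v^{2α−2} (x − v)^{−γ} dv ≤ C · x^{−γ} (1 + ln x)^η. -/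
open MeasureTheory Set Filter Asymptotics Real intervalIntegral
open scoped Interval

/-! On `(1, x)` the factor `(x - v)^(-γ)` is at least `x^(-γ)`, and on `(1, x/2]` at most
`(x/2)^(-γ)`; on `(x/2, x)` the factor `v^(2α-2)` is at most `(x/2)^(2α-2)` while `(x - v)^(-γ)`
integrates to `(x/2)^(1-γ)/(1-γ)`. Hence the integral is comparable to
`x^(-γ) (1 + ∫₁^x v^(2α-2) dv)` for `x ≥ 2`, and `∫₁^x v^(2α-2) dv` stays bounded for `α < 1/2`
and equals `log x` for `α = 1/2`. -/

section Comparability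

variable {X : Type*} {f g : X → ℝ} {s : Set X} {c C : ℝ}

lemma isTheta_principal_of_bounds (hc : 0 < c) (hg : ∀ x ∈ s, 0 ≤ g x)
    (h : ∀ x ∈ s, c * g x ≤ f x ∧ f x ≤ C * g x) : f =Θ[𝓟 s] g := by
  have hf : ∀ x ∈ s, 0 ≤ f x := fun x hx => (mul_nonneg hc.le (hg x hx)).trans (h x hx).1
  refine ⟨isBigO_principal.2 ⟨C, fun x hx => ?_⟩,
    isBigO_principal.2 ⟨c⁻¹, fun x hx => ?_⟩⟩
  · rw [norm_of_nonneg (hf x hx), norm_of_nonneg (hg x hx)]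
    exact (h x hx).2
  · rw [norm_of_nonneg (hf x hx), norm_of_nonneg (hg x hx), ← div_eq_inv_mul,
      le_div_iff₀' hc]
    exact (h x hx).1

lemma exists_bounds_of_isTheta_principal (h : f =Θ[𝓟 s] g) (hf : ∀ x ∈ s, 0 ≤ f x)
    (hg : ∀ x ∈ s, 0 ≤ g x) {x₀ : X} (hx₀ : x₀ ∈ s) (hgx₀ : 0 < g x₀) :
    ∃ c C : ℝ, 0 < c ∧ c ≤ C ∧ ∀ x ∈ s, c * g x ≤ f x ∧ f x ≤ C * g x := by
  obtain ⟨C, hC⟩ := isBigO_principal.1 h.1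
  obtain ⟨k, hk, hkg⟩ := h.2.exists_pos
  rw [isBigOWith_principal] at hkg
  have hbounds : ∀ x ∈ s, k⁻¹ * g x ≤ f x ∧ f x ≤ C * g x := fun x hx => by
    have hC := hC x hx
    have hkg := hkg x hx
    rw [norm_of_nonneg (hf x hx), norm_of_nonneg (hg x hx)] at hC hkg
    exact ⟨by rwa [← div_eq_inv_mul, div_le_iff₀' hk], hC⟩
  refine ⟨k⁻¹, C, inv_pos.2 hk, ?_, hbounds⟩
  obtain ⟨hlow, hup⟩ := hbounds x₀ hx₀
  exact le_of_mul_le_mul_right (hlow.trans hup) hgx₀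

end Comparability

section KernelIntegral

variable {p γ a b x : ℝ}

lemma intervalIntegrable_sub_rpow_neg (hγ : γ < 1) :
    IntervalIntegrable (fun v => (x - v) ^ (-γ)) volume a b := by
  simpa only [sub_sub_cancel] using
    (intervalIntegrable_rpow' (a := x - a) (b := x - b) (by linarith)).comp_sub_left x

lemma intervalIntegrable_rpow_mul_sub_rpow (hγ : γ < 1) (h0 : (0 : ℝ) ∉ [[a, b]]) :
    IntervalIntegrable (fun v => v ^ p * (x - v) ^ (-γ)) volume a b :=
  (intervalIntegrable_sub_rpow_neg hγ).continuousOn_mul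
    (continuousOn_id.rpow_const fun _ hv => Or.inl (ne_of_mem_of_not_mem hv h0))

lemma integral_sub_rpow_neg (hγ : γ < 1) (a x : ℝ) :
    ∫ v in a..x, (x - v) ^ (-γ) = (x - a) ^ (1 - γ) / (1 - γ) := by
  rw [intervalIntegral.integral_comp_sub_left (fun u => u ^ (-γ)), sub_self,
    integral_rpow (Or.inl (by linarith)), zero_rpow (by linarith), sub_zero, neg_add_eq_sub]

lemma integral_rpow_nonneg (hab : a ≤ b) (ha : 0 ≤ a) : 0 ≤ ∫ v in a..b, v ^ p :=
  intervalIntegral.integral_nonneg hab fun _ hv => rpow_nonneg (ha.trans hv.1) p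

lemma integral_rpow_mono (ha : 0 < a) (hab : a ≤ b) (hbx : b ≤ x) :
    ∫ v in a..b, v ^ p ≤ ∫ v in a..x, v ^ p :=
  integral_mono_interval le_rfl hab hbx
    ((ae_restrict_iff' measurableSet_Ioc).2 (ae_of_all _ fun _ hv =>
      rpow_nonneg (ha.trans hv.1).le p))
    (intervalIntegrable_rpow (Or.inr (notMem_uIcc_of_lt ha (by linarith))))

lemma rpow_neg_mul_integral_rpow_le (hγ0 : 0 ≤ γ) (hγ1 : γ < 1) (ha : 0 < a) (hax : a ≤ x) :
    x ^ (-γ) * ∫ v in a..x, v ^ p ≤ ∫ v in a..x, v ^ p * (x - v) ^ (-γ) := by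
  have h0 : (0 : ℝ) ∉ [[a, x]] := notMem_uIcc_of_lt ha (ha.trans_le hax)
  rw [← intervalIntegral.integral_const_mul]
  refine integral_mono_on_of_le_Ioo hax ((intervalIntegrable_rpow (Or.inr h0)).const_mul _)
    (intervalIntegrable_rpow_mul_sub_rpow hγ1 h0) fun v hv => ?_
  rw [mul_comm]
  exact mul_le_mul_of_nonneg_left
    (rpow_le_rpow_of_nonpos (sub_pos.2 hv.2) (by linarith [ha.trans hv.1]) (neg_nonpos.2 hγ0))
    (rpow_nonneg (ha.trans hv.1).le p)

lemma integral_rpow_mul_sub_rpow_le_sub_rpow_mul (hγ0 : 0 ≤ γ) (hγ1 : γ < 1) (ha : 0 < a)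
    (hab : a ≤ b) (hbx : b < x) :
    ∫ v in a..b, v ^ p * (x - v) ^ (-γ) ≤ (x - b) ^ (-γ) * ∫ v in a..b, v ^ p := by
  have h0 : (0 : ℝ) ∉ [[a, b]] := notMem_uIcc_of_lt ha (ha.trans_le hab)
  rw [← intervalIntegral.integral_const_mul]
  refine integral_mono_on hab (intervalIntegrable_rpow_mul_sub_rpow hγ1 h0)
    ((intervalIntegrable_rpow (Or.inr h0)).const_mul _) fun v hv => ?_
  rw [mul_comm (_ ^ (-γ))]
  exact mul_le_mul_of_nonneg_left
    (rpow_le_rpow_of_nonpos (sub_pos.2 hbx) (by linarith [hv.2]) (neg_nonpos.2 hγ0))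
    (rpow_nonneg (ha.trans_le hv.1).le p)

lemma integral_rpow_mul_sub_rpow_le_rpow_mul (hp : p ≤ 0) (hγ1 : γ < 1) (ha : 0 < a)
    (hax : a ≤ x) :
    ∫ v in a..x, v ^ p * (x - v) ^ (-γ) ≤ a ^ p * ((x - a) ^ (1 - γ) / (1 - γ)) := by
  have h0 : (0 : ℝ) ∉ [[a, x]] := notMem_uIcc_of_lt ha (ha.trans_le hax)
  rw [← integral_sub_rpow_neg hγ1, ← intervalIntegral.integral_const_mul]
  refine integral_mono_on_of_le_Ioo hax (intervalIntegrable_rpow_mul_sub_rpow hγ1 h0)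
    ((intervalIntegrable_sub_rpow_neg hγ1).const_mul _) fun v hv => ?_
  exact mul_le_mul_of_nonneg_right (rpow_le_rpow_of_nonpos ha hv.1.le hp)
    (rpow_nonneg (sub_pos.2 hv.2).le _)

lemma integral_rpow_mul_sub_rpow_le (hp : p ≤ -1) (hγ0 : 0 ≤ γ) (hγ1 : γ < 1) (hx : 2 ≤ x) :
    ∫ v in (1 : ℝ)..x, v ^ p * (x - v) ^ (-γ) ≤
      (x / 2) ^ (-γ) * ((∫ v in (1 : ℝ)..x, v ^ p) + 1 / (1 - γ)) := by
  have hx2 : 1 ≤ x / 2 := by linarith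
  have hhalf : 0 < x / 2 := by linarith
  have hxx : x - x / 2 = x / 2 := by ring
  have hnear := integral_rpow_mul_sub_rpow_le_sub_rpow_mul (p := p) (x := x) hγ0 hγ1 one_pos hx2
    (by linarith)
  have hfar := integral_rpow_mul_sub_rpow_le_rpow_mul (p := p) (x := x) (by linarith) hγ1 hhalf
    (by linarith)
  have hmono := integral_rpow_mono (p := p) (x := x) one_pos hx2 (by linarith)
  have hpow : (x / 2) ^ p * (x / 2) ^ (1 - γ) ≤ (x / 2) ^ (-γ) := by
    rw [← rpow_add hhalf, show p + (1 - γ) = (p + 1) + -γ by ring, rpow_add hhalf]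
    exact mul_le_of_le_one_left (rpow_nonneg hhalf.le _)
      (rpow_le_one_of_one_le_of_nonpos hx2 (by linarith))
  rw [hxx] at hnear hfar
  rw [← integral_add_adjacent_intervals (b := x / 2)
    (intervalIntegrable_rpow_mul_sub_rpow hγ1 (notMem_uIcc_of_lt one_pos hhalf))
    (intervalIntegrable_rpow_mul_sub_rpow hγ1 (notMem_uIcc_of_lt hhalf (by linarith)))]
  calc _ ≤ (x / 2) ^ (-γ) * (∫ v in (1 : ℝ)..x / 2, v ^ p)
          + (x / 2) ^ p * ((x / 2) ^ (1 - γ) / (1 - γ)) := add_le_add hnear hfar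
    _ ≤ (x / 2) ^ (-γ) * (∫ v in (1 : ℝ)..x, v ^ p) + (x / 2) ^ (-γ) / (1 - γ) := by
        rw [← mul_div_assoc]
        gcongr
    _ = _ := by ring

lemma integral_rpow_le_of_lt_neg_one (hp : p < -1) (ha : 0 < a) (hax : a ≤ x) :
    ∫ v in a..x, v ^ p ≤ a ^ (p + 1) / (-(p + 1)) := by
  rw [integral_rpow (Or.inr ⟨hp.ne, notMem_uIcc_of_lt ha (ha.trans_le hax)⟩),
    ← neg_div_neg_eq, neg_sub]
  exact div_le_div_of_nonneg_right (sub_le_self _ (rpow_nonneg (ha.trans_le hax).le _))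
    (by linarith)

lemma isTheta_integral_rpow_mul_sub_rpow (hp : p ≤ -1) (hγ0 : 0 ≤ γ) (hγ1 : γ < 1) :
    (fun x => ∫ v in (1 : ℝ)..x, v ^ p * (x - v) ^ (-γ)) =Θ[𝓟 (Ici 2)]
      fun x => x ^ (-γ) * (1 + ∫ v in (1 : ℝ)..x, v ^ p) := by
  -- `∫₁^x v^p ≥ ∫₁^2 v^p > 0` makes `1 + ∫₁^x v^p` comparable to `∫₁^x v^p`
  set J₂ := ∫ v in (1 : ℝ)..2, v ^ p
  have hJ₂ : 0 < J₂ := intervalIntegral_pos_of_pos_on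
    (intervalIntegrable_rpow (Or.inr (notMem_uIcc_of_lt one_pos two_pos)))
    (fun v hv => rpow_pos_of_pos (one_pos.trans hv.1) p) one_lt_two
  refine isTheta_principal_of_bounds (c := J₂ / (1 + J₂)) (C := 2 ^ γ / (1 - γ)) (by positivity)
    (fun x (hx : 2 ≤ x) => ?_) fun x (hx : 2 ≤ x) => ⟨?_, ?_⟩
  · exact mul_nonneg (rpow_nonneg (by linarith) _)
      (by linarith [integral_rpow_nonneg (p := p) (by linarith : (1 : ℝ) ≤ x) zero_le_one])
  · have hJ : J₂ ≤ ∫ v in (1 : ℝ)..x, v ^ p := integral_rpow_mono one_pos one_le_two hx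
    have hc : J₂ / (1 + J₂) * (1 + ∫ v in (1 : ℝ)..x, v ^ p) ≤ ∫ v in (1 : ℝ)..x, v ^ p := by
      rw [div_mul_eq_mul_div, div_le_iff₀ (by positivity)]
      nlinarith
    calc _ = x ^ (-γ) * (J₂ / (1 + J₂) * (1 + ∫ v in (1 : ℝ)..x, v ^ p)) := by ring
      _ ≤ x ^ (-γ) * ∫ v in (1 : ℝ)..x, v ^ p := by gcongr
      _ ≤ _ := rpow_neg_mul_integral_rpow_le hγ0 hγ1 one_pos (by linarith)
  · have hhalf : (x / 2) ^ (-γ) = 2 ^ γ * x ^ (-γ) := by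
      rw [div_rpow (by linarith) zero_le_two, rpow_neg zero_le_two, div_inv_eq_mul, mul_comm]
    have hC : (∫ v in (1 : ℝ)..x, v ^ p) + 1 / (1 - γ) ≤
        (1 + ∫ v in (1 : ℝ)..x, v ^ p) / (1 - γ) := by
      rw [add_div, add_comm (1 / (1 - γ))]
      gcongr
      exact le_div_self (integral_rpow_nonneg (by linarith) zero_le_one) (by linarith) (by linarith)
    calc _ ≤ (x / 2) ^ (-γ) * ((∫ v in (1 : ℝ)..x, v ^ p) + 1 / (1 - γ)) :=
          integral_rpow_mul_sub_rpow_le hp hγ0 hγ1 hx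
      _ ≤ 2 ^ γ * x ^ (-γ) * ((1 + ∫ v in (1 : ℝ)..x, v ^ p) / (1 - γ)) := by
          rw [hhalf]
          gcongr
      _ = _ := by ring

lemma isTheta_one_add_integral_rpow_of_lt_neg_one (hp : p < -1) :
    (fun x => 1 + ∫ v in (1 : ℝ)..x, v ^ p) =Θ[𝓟 (Ici 1)] fun _ => (1 : ℝ) :=
  isTheta_principal_of_bounds (C := 1 + 1 / (-(p + 1))) one_pos (fun _ _ => zero_le_one)
    fun x hx => by
      have hJ := integral_rpow_le_of_lt_neg_one hp one_pos hx
      rw [one_rpow] at hJ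
      constructor <;> linarith [integral_rpow_nonneg (p := p) (mem_Ici.1 hx) zero_le_one]

end KernelIntegral

theorem main_integral_estimate_general (γ α : ℝ) (hγ0 : 0 ≤ γ) (hγ1 : γ < 1)
    (hα2 : α ≤ 1/2)
    (η : ℝ) (hη : η = if α = 1/2 then 1 else 0) :
    ∃ c C : ℝ, 0 < c ∧ c ≤ C ∧
      ∀ x : ℝ, 2 ≤ x →
        c * x ^ (-γ) * (1 + Real.log x) ^ η ≤
          (∫ v in Set.Ioo (1:ℝ) x, v ^ (2*α-2) * (x-v) ^ (-γ)) ∧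
        (∫ v in Set.Ioo (1:ℝ) x, v ^ (2*α-2) * (x-v) ^ (-γ)) ≤
          C * x ^ (-γ) * (1 + Real.log x) ^ η := by
  have hJ : (fun x => 1 + ∫ v in (1 : ℝ)..x, v ^ (2 * α - 2)) =Θ[𝓟 (Ici 2)]
      fun x => (1 + log x) ^ η := by
    rcases hα2.lt_or_eq with hα | rfl
    · simp only [hη, if_neg hα.ne, rpow_zero]
      exact (isTheta_one_add_integral_rpow_of_lt_neg_one (by linarith)).mono
        (principal_mono.2 (Ici_subset_Ici.2 one_le_two))
    · refine EventuallyEq.isTheta (eventually_principal.2 fun x (hx : 2 ≤ x) => ?_)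
      norm_num [hη, rpow_neg_one, integral_inv_of_pos one_pos (by linarith : (0 : ℝ) < x)]
  have hpos : ∀ x ∈ Ici (2 : ℝ), 0 < x ^ (-γ) * (1 + log x) ^ η := fun x (hx : 2 ≤ x) =>
    mul_pos (rpow_pos_of_pos (by linarith) _)
      (rpow_pos_of_pos (by linarith [log_nonneg (by linarith : (1 : ℝ) ≤ x)]) _)
  obtain ⟨c, C, hc, hcC, hbounds⟩ := exists_bounds_of_isTheta_principal
    ((isTheta_integral_rpow_mul_sub_rpow (by linarith) hγ0 hγ1).trans (isTheta_rfl.mul hJ))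
    (fun x (hx : 2 ≤ x) => intervalIntegral.integral_nonneg (by linarith) fun v hv =>
      mul_nonneg (rpow_nonneg (by linarith [hv.1]) _) (rpow_nonneg (by linarith [hv.2]) _))
    (fun x hx => (hpos x hx).le) self_mem_Ici (hpos 2 self_mem_Ici)
  refine ⟨c, C, hc, hcC, fun x hx => ?_⟩
  rw [← integral_Ioc_eq_integral_Ioo, ← intervalIntegral.integral_of_le (by linarith)]
  simpa only [mul_assoc] using hbounds x hx

/-- Two-sided estimate for `∫₁^x v^{2α-2} (x-v)^{-γ} dv ≍ x^{-γ}(1 + ln x)^η` for `x ≥ 2`,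
where `η = 0` for `α ∈ (-1/2,1/2)` and `η = 1` for `α = 1/2`. -/
theorem main_integral_estimate (γ α : ℝ) (hγ0 : 0 ≤ γ) (hγ1 : γ < 1)
    (hα1 : -(1/2) < α) (hα2 : α ≤ 1/2)
    (η : ℝ) (hη : η = if α = 1/2 then 1 else 0) :
    ∃ c C : ℝ, 0 < c ∧ c ≤ C ∧
      ∀ x : ℝ, 2 ≤ x →
        c * x ^ (-γ) * (1 + Real.log x) ^ η ≤
          (∫ v in Set.Ioo (1:ℝ) x, v ^ (2*α-2) * (x-v) ^ (-γ)) ∧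
        (∫ v in Set.Ioo (1:ℝ) x, v ^ (2*α-2) * (x-v) ^ (-γ)) ≤
          C * x ^ (-γ) * (1 + Real.log x) ^ η :=
  main_integral_estimate_general γ α hγ0 hγ1 hα2 η hη
end
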